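/- arXiv:2508.19617 — 9 statements merged into one kernel-verified Lean document; each statement's English description precedes it below -/
import Mathlib

section
/- Every finite nonempty simple graph G of minimum degree d satisfies fdom(G) ≥ (d+1)/(1+ln(d+1)); more precisely, there exists a finitely supported probability distribution over the dominating sets of G under which every vertex belongs to the random dominating set with probability at most (1+ln(d+1))/(d+1). -/
open Finset
open scoped Classical

/-- `D` is a dominating set of `G`. -/
def IsDominatingSet {V : Type*} (G : SimpleGraph V) (D : Finset V) : Prop :=
  ∀ v : V, ∃ u ∈ D, u = v ∨ G.Adj u v

/-- A finitely supported probability distribution over dominating sets of `G`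
under which each vertex has marginal probability at most `p`. -/
def IsDomDistribution {V : Type*} [Fintype V] [DecidableEq V]
    (G : SimpleGraph V) (w : Finset V → ℝ) (p : ℝ) : Prop :=
  (∀ D, 0 ≤ w D) ∧ (∑ D : Finset V, w D) = 1 ∧
    (∀ D, w D ≠ 0 → IsDominatingSet G D) ∧
    (∀ v : V, ∑ D ∈ Finset.univ.filter (fun D : Finset V => v ∈ D), w D ≤ p)

/-- The fractional domatic number of `G`. -/
noncomputable def fdom {V : Type*} [Fintype V] [DecidableEq V] (G : SimpleGraph V) : ℝ :=
  sSup {x : ℝ | ∃ p : ℝ, 0 < p ∧ p ≤ 1 ∧ x = 1 / p ∧ ∃ w : Finset V → ℝ, IsDomDistribution G w p}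

lemma binom_sum {V : Type*} [Fintype V] [DecidableEq V] (p : ℝ) (A : Finset V) :
    ∑ S ∈ Aᶜ.powerset, p ^ S.card * (1 - p) ^ (Fintype.card V - S.card)
      = (1 - p) ^ A.card := by
  have h := Finset.prod_add (fun _ : V => p) (fun _ : V => 1 - p) Aᶜ
  simp only [add_sub_cancel, Finset.prod_const, one_pow] at h
  calc ∑ S ∈ Aᶜ.powerset, p ^ S.card * (1 - p) ^ (Fintype.card V - S.card)
      = ∑ S ∈ Aᶜ.powerset, (1 - p) ^ A.card * (p ^ S.card * (1 - p) ^ (Aᶜ \ S).card) := by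
        refine Finset.sum_congr rfl fun S hS => ?_
        rw [Finset.mem_powerset] at hS
        have h1 : (Aᶜ \ S).card = Aᶜ.card - S.card := Finset.card_sdiff_of_subset hS
        have h2 : Aᶜ.card = Fintype.card V - A.card := Finset.card_compl A
        have h3 : S.card ≤ Aᶜ.card := Finset.card_le_card hS
        have h4 : A.card ≤ Fintype.card V := Finset.card_le_univ A
        have : Fintype.card V - S.card = A.card + (Aᶜ \ S).card := by omega
        rw [this, pow_add]; ring
    _ = (1 - p) ^ A.card := by rw [← Finset.mul_sum, ← h, mul_one]

lemma fiber_sum {V : Type*} [Fintype V] [DecidableEq V] (f : Finset V → Finset V)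
    (w0 : Finset V → ℝ) (P : Finset V → Prop) :
    ∑ D ∈ Finset.univ.filter P, ∑ S ∈ Finset.univ.filter (fun S => f S = D), w0 S
      = ∑ S ∈ Finset.univ.filter (fun S => P (f S)), w0 S := by
  rw [← Finset.sum_fiberwise_of_maps_to (s := Finset.univ.filter (fun S => P (f S)))
    (g := f) (t := Finset.univ.filter P)
    (fun S hS => by simp only [Finset.mem_filter, Finset.mem_univ, true_and] at hS ⊢; exact hS)]
  refine Finset.sum_congr rfl fun D hD => ?_
  simp only [Finset.mem_filter, Finset.mem_univ, true_and] at hD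
  refine Finset.sum_congr ?_ fun _ _ => rfl
  ext S
  simp only [Finset.mem_filter, Finset.mem_univ, true_and]
  exact ⟨fun h => ⟨by rw [h]; exact hD, h⟩, fun h => h.2⟩

lemma one_le_card_mul {V : Type*} [Fintype V] [DecidableEq V] [Nonempty V]
    (G : SimpleGraph V) (w : Finset V → ℝ) (p : ℝ)
    (h : IsDomDistribution G w p) : 1 ≤ (Fintype.card V : ℝ) * p := by
  obtain ⟨hnn, hsum, hdom, hmarg⟩ := h
  have key : ∑ v : V, ∑ D ∈ Finset.univ.filter (fun D : Finset V => v ∈ D), w D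
      = ∑ D : Finset V, (D.card : ℝ) * w D := by
    have : ∀ v : V, ∑ D ∈ Finset.univ.filter (fun D : Finset V => v ∈ D), w D
        = ∑ D : Finset V, (if v ∈ D then w D else 0) := by
      intro v; rw [Finset.sum_filter]
    simp only [this]
    rw [Finset.sum_comm]
    refine Finset.sum_congr rfl fun D _ => ?_
    rw [Finset.sum_ite_mem, Finset.univ_inter, Finset.sum_const, nsmul_eq_mul]
  have h1 : (1:ℝ) ≤ ∑ D : Finset V, (D.card : ℝ) * w D := by
    rw [← hsum]
    refine Finset.sum_le_sum fun D _ => ?_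
    by_cases hD : w D = 0
    · simp [hD]
    · have hcard : 1 ≤ D.card := by
        obtain ⟨v⟩ := ‹Nonempty V›
        obtain ⟨u, hu, _⟩ := hdom D hD v
        exact Finset.card_pos.mpr ⟨u, hu⟩
      calc w D = 1 * w D := (one_mul _).symm
        _ ≤ (D.card : ℝ) * w D := by
            apply mul_le_mul_of_nonneg_right _ (hnn D)
            exact_mod_cast hcard
  have h2 : ∑ v : V, ∑ D ∈ Finset.univ.filter (fun D : Finset V => v ∈ D), w D
      ≤ (Fintype.card V : ℝ) * p := by
    calc _ ≤ ∑ _v : V, p := Finset.sum_le_sum fun v _ => hmarg v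
      _ = (Fintype.card V : ℝ) * p := by rw [Finset.sum_const, nsmul_eq_mul, Finset.card_univ]
  rw [key] at h2
  linarith


lemma exists_dom_dist {V : Type*} [Fintype V] [DecidableEq V] [Nonempty V]
    (G : SimpleGraph V) (d : ℕ) (hd : G.minDegree = d) :
    ∃ w : Finset V → ℝ, IsDomDistribution G w ((1 + Real.log (d + 1)) / (d + 1)) := by
  set n := Fintype.card V
  have hd1 : (0:ℝ) < (d:ℝ) + 1 := by positivity
  have hlog0 : 0 ≤ Real.log ((d:ℝ) + 1) := Real.log_nonneg (by linarith)
  have hlogd : Real.log ((d:ℝ) + 1) ≤ d := by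
    have := Real.log_le_sub_one_of_pos hd1; linarith
  set p : ℝ := Real.log ((d:ℝ) + 1) / ((d:ℝ) + 1) with hp_def
  have hp0 : 0 ≤ p := by positivity
  have hp1 : p ≤ 1 := by
    rw [hp_def, div_le_one hd1]; linarith
  have hq0 : 0 ≤ 1 - p := by linarith
  set w0 : Finset V → ℝ := fun S => p ^ S.card * (1 - p) ^ (n - S.card) with hw0_def
  have hw0nn : ∀ S, 0 ≤ w0 S := fun S => by positivity
  set f : Finset V → Finset V := fun S =>
    S ∪ Finset.univ.filter (fun v => ∀ u ∈ S, ¬(u = v ∨ G.Adj u v)) with hf_def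
  have hfdom : ∀ S, IsDominatingSet G (f S) := by
    intro S v
    by_cases h : ∃ u ∈ S, u = v ∨ G.Adj u v
    · obtain ⟨u, hu, huv⟩ := h
      exact ⟨u, Finset.mem_union_left _ hu, huv⟩
    · push_neg at h
      refine ⟨v, Finset.mem_union_right _ ?_, Or.inl rfl⟩
      simp only [Finset.mem_filter, Finset.mem_univ, true_and]
      intro u hu; rw [not_or]; exact h u hu
  set w : Finset V → ℝ := fun D => ∑ S ∈ Finset.univ.filter (fun S => f S = D), w0 S with hw_def
  refine ⟨w, fun D => Finset.sum_nonneg fun S _ => hw0nn S, ?_, ?_, ?_⟩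
  · -- total sum is 1
    have h0 : ∑ D : Finset V, w D
        = ∑ D ∈ Finset.univ.filter (fun _ : Finset V => True), w D := by simp
    have h1 : ∑ D ∈ Finset.univ.filter (fun _ : Finset V => True), w D
        = ∑ S ∈ Finset.univ.filter (fun _ : Finset V => True), w0 S := by
      have := fiber_sum f w0 (fun _ => True)
      convert this using 2 <;> congr!
    have h2 : ∑ S ∈ Finset.univ.filter (fun _ : Finset V => True), w0 S
        = ∑ S ∈ (∅ : Finset V)ᶜ.powerset, w0 S := by
      refine Finset.sum_congr ?_ fun _ _ => rfl
      simp
    have h3 : ∑ S ∈ (∅ : Finset V)ᶜ.powerset, w0 S = (1 - p) ^ (∅ : Finset V).card :=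
      binom_sum p ∅
    rw [h0, h1, h2, h3]
    simp
  · -- support consists of dominating sets
    intro D hD
    have : (Finset.univ.filter (fun S => f S = D)).Nonempty := by
      by_contra h
      rw [Finset.not_nonempty_iff_eq_empty] at h
      exact hD (by rw [hw_def]; simp [h])
    obtain ⟨S, hS⟩ := this
    simp only [Finset.mem_filter] at hS
    rw [← hS.2]
    exact hfdom S
  · -- marginals
    intro v
    have hstep : ∑ D ∈ Finset.univ.filter (fun D : Finset V => v ∈ D), w D
        = ∑ S ∈ Finset.univ.filter (fun S => v ∈ f S), w0 S := by
      have := fiber_sum f w0 (fun D => v ∈ D)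
      convert this using 2 <;> congr!
    rw [hstep]
    -- v ∈ f S  ↔  v ∈ S ∨ S ∩ N[v] = ∅
    set Nv : Finset V := Finset.univ.filter (fun u => u = v ∨ G.Adj u v) with hNv_def
    have hcard : Nv.card = G.degree v + 1 := by
      have : Nv = insert v (G.neighborFinset v) := by
        ext u
        simp only [hNv_def, Finset.mem_filter, Finset.mem_univ, true_and, Finset.mem_insert,
          SimpleGraph.mem_neighborFinset]
        constructor
        · rintro (rfl | h)
          · exact Or.inl rfl
          · exact Or.inr h.symm
        · rintro (rfl | h)
          · exact Or.inl rfl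
          · exact Or.inr h.symm
      rw [this, Finset.card_insert_of_notMem (by simp), SimpleGraph.card_neighborFinset_eq_degree]
    have hsub : Finset.univ.filter (fun S => v ∈ f S) ⊆
        Finset.univ.filter (fun S : Finset V => v ∈ S) ∪ Nvᶜ.powerset := by
      intro S hS
      simp only [Finset.mem_filter, Finset.mem_univ, true_and, hf_def, Finset.mem_union,
        Finset.mem_filter, Finset.mem_powerset] at hS ⊢
      rcases hS with hS | hS
      · exact Or.inl hS
      · right
        intro u hu
        simp only [Finset.mem_compl, hNv_def, Finset.mem_filter, Finset.mem_univ, true_and]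
        exact hS u hu
    have key : ∑ S ∈ Finset.univ.filter (fun S => v ∈ f S), w0 S ≤
        (∑ S ∈ Finset.univ.filter (fun S : Finset V => v ∈ S), w0 S) +
        ∑ S ∈ Nvᶜ.powerset, w0 S := by
      calc ∑ S ∈ Finset.univ.filter (fun S => v ∈ f S), w0 S
          ≤ ∑ S ∈ Finset.univ.filter (fun S : Finset V => v ∈ S) ∪ Nvᶜ.powerset, w0 S :=
            Finset.sum_le_sum_of_subset_of_nonneg hsub (fun S _ _ => hw0nn S)
        _ ≤ _ := by
            have := Finset.sum_union_inter (s₁ := Finset.univ.filter (fun S : Finset V => v ∈ S))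
              (s₂ := Nvᶜ.powerset) (f := w0)
            have hnn : 0 ≤ ∑ S ∈ Finset.univ.filter (fun S : Finset V => v ∈ S) ∩ Nvᶜ.powerset,
              w0 S := Finset.sum_nonneg fun S _ => hw0nn S
            linarith
    -- first summand = p
    have hA : ∑ S ∈ Finset.univ.filter (fun S : Finset V => v ∈ S), w0 S = 1 - (1 - p) := by
      have htot : ∑ S ∈ Finset.univ.filter (fun S : Finset V => v ∈ S), w0 S
          + ∑ S ∈ Finset.univ.filter (fun S : Finset V => ¬ v ∈ S), w0 S
          = ∑ S : Finset V, w0 S := Finset.sum_filter_add_sum_filter_not _ _ _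
      have h2 : Finset.univ.filter (fun S : Finset V => ¬ v ∈ S) = ({v} : Finset V)ᶜ.powerset := by
        ext S
        simp only [Finset.mem_filter, Finset.mem_univ, true_and, Finset.mem_powerset]
        constructor
        · intro h u hu
          simp only [Finset.mem_compl, Finset.mem_singleton]
          rintro rfl; exact h hu
        · intro h hv
          have := h hv
          simp at this
      have h3 : ∑ S : Finset V, w0 S = 1 := by
        have hb := binom_sum (V := V) p ∅
        simpa using hb
      rw [h2, binom_sum, h3] at htot
      simp only [Finset.card_singleton, pow_one] at htot
      linarith
    -- second summand
    have hB : ∑ S ∈ Nvᶜ.powerset, w0 S = (1 - p) ^ (G.degree v + 1) := by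
      have := binom_sum (V := V) p Nv
      rw [hcard] at this
      exact this
    have hdeg : d + 1 ≤ G.degree v + 1 := by
      have := G.minDegree_le_degree v; omega
    have hmono : (1 - p) ^ (G.degree v + 1) ≤ (1 - p) ^ (d + 1) :=
      pow_le_pow_of_le_one hq0 (by linarith) hdeg
    have hexp : (1 - p) ^ (d + 1) ≤ 1 / ((d:ℝ) + 1) := by
      have h1 : 1 - p ≤ Real.exp (-p) := by
        have := Real.add_one_le_exp (-p); linarith
      have h2 : (1 - p) ^ (d + 1) ≤ Real.exp (-p) ^ (d + 1) :=
        pow_le_pow_left₀ hq0 h1 _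
      have h3 : Real.exp (-p) ^ (d + 1) = Real.exp (-(p * ((d:ℝ) + 1))) := by
        rw [← Real.exp_nat_mul]; congr 1; push_cast; ring
      have h4 : p * ((d:ℝ) + 1) = Real.log ((d:ℝ) + 1) := by
        rw [hp_def]; field_simp
      rw [h3, h4, Real.exp_neg, Real.exp_log hd1] at h2
      rw [one_div]
      push_cast at h2 ⊢
      exact h2
    have : ∑ S ∈ Finset.univ.filter (fun S => v ∈ f S), w0 S ≤ p + 1 / ((d:ℝ) + 1) := by
      rw [hA] at key
      have := hB ▸ key
      linarith
    refine this.trans ?_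
    rw [hp_def]
    rw [div_add_div _ _ (by linarith) (by linarith : ((d:ℝ)+1) ≠ 0)]
    rw [div_le_div_iff₀ (by positivity) hd1]
    ring_nf
    nlinarith [sq_nonneg ((d:ℝ)+1), hlog0]

/-- Every finite nonempty graph of minimum degree `d` has fractional domatic number at least
`(d+1)/(1+ln(d+1))`; more precisely, it carries a finitely supported probability distribution
over its dominating sets giving each vertex probability at most `(1+ln(d+1))/(d+1)`. -/
theorem fdom_ge_of_minDegree {V : Type*} [Fintype V] [DecidableEq V] [Nonempty V]
    (G : SimpleGraph V) (d : ℕ) (hd : G.minDegree = d) :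
    ((d : ℝ) + 1) / (1 + Real.log (d + 1)) ≤ fdom G ∧
      ∃ w : Finset V → ℝ, IsDomDistribution G w ((1 + Real.log (d + 1)) / (d + 1)) := by
  obtain ⟨w, hw⟩ := exists_dom_dist G d hd
  refine ⟨?_, w, hw⟩
  have hd1 : (0:ℝ) < (d:ℝ) + 1 := by positivity
  have hlog0 : 0 ≤ Real.log ((d:ℝ) + 1) := Real.log_nonneg (by linarith)
  have hlogd : Real.log ((d:ℝ) + 1) ≤ d := by
    have := Real.log_le_sub_one_of_pos hd1; linarith
  have hp0 : 0 < (1 + Real.log ((d:ℝ) + 1)) / ((d:ℝ) + 1) := by positivity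
  have hp1 : (1 + Real.log ((d:ℝ) + 1)) / ((d:ℝ) + 1) ≤ 1 := by
    rw [div_le_one hd1]; linarith
  have hbdd : BddAbove {x : ℝ | ∃ p : ℝ, 0 < p ∧ p ≤ 1 ∧ x = 1 / p ∧
      ∃ w : Finset V → ℝ, IsDomDistribution G w p} := by
    refine ⟨(Fintype.card V : ℝ), ?_⟩
    rintro x ⟨p, hq0, hq1, rfl, w', hw'⟩
    have := one_le_card_mul G w' p hw'
    rw [div_le_iff₀ hq0]
    linarith [mul_comm (Fintype.card V : ℝ) p]
  have hmem : ((d : ℝ) + 1) / (1 + Real.log (d + 1)) ∈ {x : ℝ | ∃ p : ℝ, 0 < p ∧ p ≤ 1 ∧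
      x = 1 / p ∧ ∃ w : Finset V → ℝ, IsDomDistribution G w p} :=
    ⟨(1 + Real.log ((d:ℝ) + 1)) / ((d:ℝ) + 1), hp0, hp1, (one_div_div _ _).symm, w, hw⟩
  exact le_csSup hbdd hmem
end

section
/- Let G be a finite nonempty simple graph with n vertices and domination number γ (the minimum size of a dominating set of G). Then fdom(G) ≤ n/γ. Moreover, if G is vertex-transitive (its automorphism group acts transitively on the vertices), then fdom(G) = n/γ. -/
open Finset
open scoped Classical
set_option linter.unusedSectionVars false

/-- The domination number of `G`: the minimum size of a dominating set. -/
noncomputable def domNumber {V : Type*} [Fintype V] [DecidableEq V] (G : SimpleGraph V) : ℕ :=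
  sInf {k : ℕ | ∃ D : Finset V, IsDominatingSet G D ∧ D.card = k}

section Aux
variable {V : Type*} [Fintype V] [DecidableEq V] [Nonempty V] (G : SimpleGraph V)

lemma aux_univ_dom : IsDominatingSet G univ := fun v => ⟨v, mem_univ v, Or.inl rfl⟩

lemma aux_domNumber_mem :
    ∃ D : Finset V, IsDominatingSet G D ∧ D.card = domNumber G :=
  Nat.sInf_mem (⟨Fintype.card V, univ, aux_univ_dom G, card_univ⟩ :
    {k : ℕ | ∃ D : Finset V, IsDominatingSet G D ∧ D.card = k}.Nonempty)

lemma aux_domNumber_pos : 0 < domNumber G := by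
  obtain ⟨D, hD, hcard⟩ := aux_domNumber_mem G
  obtain ⟨u, hu, -⟩ := hD (Classical.arbitrary V)
  exact hcard ▸ card_pos.mpr ⟨u, hu⟩

lemma aux_domNumber_le_card : domNumber G ≤ Fintype.card V :=
  Nat.sInf_le ⟨univ, aux_univ_dom G, card_univ⟩

lemma aux_domNumber_le {D : Finset V} (hD : IsDominatingSet G D) : domNumber G ≤ D.card :=
  Nat.sInf_le ⟨D, hD, rfl⟩

lemma aux_elem_le {p : ℝ} {w : Finset V → ℝ} (hp : 0 < p) (hw : IsDomDistribution G w p) :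
    (domNumber G : ℝ) ≤ p * Fintype.card V := by
  obtain ⟨h0, h1, hdom, hmarg⟩ := hw
  have key : ∑ v : V, ∑ D ∈ univ.filter (fun D : Finset V => v ∈ D), w D
      = ∑ D : Finset V, (D.card : ℝ) * w D := by
    simp_rw [sum_filter]
    rw [Finset.sum_comm]
    refine sum_congr rfl fun D _ => ?_
    rw [Finset.sum_ite_mem, univ_inter, Finset.sum_const, nsmul_eq_mul]
  have lower : (domNumber G : ℝ) ≤ ∑ D : Finset V, (D.card : ℝ) * w D := by
    have : ∑ D : Finset V, (domNumber G : ℝ) * w D ≤ ∑ D : Finset V, (D.card : ℝ) * w D := by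
      refine sum_le_sum fun D _ => ?_
      by_cases h : w D = 0
      · simp [h]
      · exact mul_le_mul_of_nonneg_right
          (Nat.cast_le.mpr (aux_domNumber_le G (hdom D h))) (h0 D)
    calc (domNumber G : ℝ) = ∑ D : Finset V, (domNumber G : ℝ) * w D := by
          rw [← Finset.mul_sum, h1, mul_one]
      _ ≤ _ := this
  have upper : ∑ v : V, ∑ D ∈ univ.filter (fun D : Finset V => v ∈ D), w D
      ≤ p * Fintype.card V := by
    calc _ ≤ ∑ _v : V, p := sum_le_sum fun v _ => hmarg v
      _ = p * Fintype.card V := by rw [Finset.sum_const, card_univ, nsmul_eq_mul, mul_comm]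
  linarith [key ▸ upper]

lemma aux_bound : ∀ x ∈ {x : ℝ | ∃ p : ℝ, 0 < p ∧ p ≤ 1 ∧ x = 1 / p ∧
    ∃ w : Finset V → ℝ, IsDomDistribution G w p},
    x ≤ (Fintype.card V : ℝ) / (domNumber G) := by
  rintro x ⟨p, hp, hp1, rfl, w, hw⟩
  have hγ : (0 : ℝ) < domNumber G := Nat.cast_pos.mpr (aux_domNumber_pos G)
  rw [div_le_div_iff₀ hp hγ, one_mul]
  have := aux_elem_le G hp hw
  nlinarith

lemma aux_one_mem : (1 : ℝ) ∈ {x : ℝ | ∃ p : ℝ, 0 < p ∧ p ≤ 1 ∧ x = 1 / p ∧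
    ∃ w : Finset V → ℝ, IsDomDistribution G w p} := by
  refine ⟨1, one_pos, le_refl 1, (one_div_one).symm, fun D => if D = univ then 1 else 0,
    fun D => by positivity, ?_, ?_, ?_⟩
  · simp
  · intro D hD
    have : D = univ := by by_contra h; simp [h] at hD
    exact this ▸ aux_univ_dom G
  · intro v
    rw [Finset.sum_ite_eq' _ (univ : Finset V) (fun _ => (1:ℝ))]
    simp

end Aux

theorem Equiv.Perm.apply_inv_self {α : Type*} (f : Equiv.Perm α) (x : α) : f (f⁻¹ x) = x :=
  Equiv.apply_symm_apply f x

theorem Equiv.Perm.inv_apply_self {α : Type*} (f : Equiv.Perm α) (x : α) : f⁻¹ (f x) = x :=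
  Equiv.symm_apply_apply f x

section Trans
variable {V : Type*} [Fintype V] [DecidableEq V] [Nonempty V] (G : SimpleGraph V)

/-- The automorphism group of `G` as a finset of permutations. -/
noncomputable def autA : Finset (Equiv.Perm V) :=
  univ.filter (fun σ => ∀ a b, G.Adj (σ a) (σ b) ↔ G.Adj a b)

lemma mem_autA {σ : Equiv.Perm V} :
    σ ∈ autA G ↔ ∀ a b, G.Adj (σ a) (σ b) ↔ G.Adj a b := by
  simp [autA]

lemma autA_mul {σ τ : Equiv.Perm V} (hσ : σ ∈ autA G) (hτ : τ ∈ autA G) :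
    σ * τ ∈ autA G := by
  rw [mem_autA] at *
  intro a b
  rw [Equiv.Perm.mul_apply, Equiv.Perm.mul_apply, hσ, hτ]

lemma autA_inv {σ : Equiv.Perm V} (hσ : σ ∈ autA G) : σ⁻¹ ∈ autA G := by
  rw [mem_autA] at *
  intro a b
  conv_rhs => rw [← Equiv.Perm.apply_inv_self σ a, ← Equiv.Perm.apply_inv_self σ b, hσ]

lemma autA_trans (htr : ∀ u v : V, ∃ e : G ≃g G, e u = v) (u v : V) :
    ∃ σ ∈ autA G, σ u = v := by
  obtain ⟨e, he⟩ := htr u v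
  exact ⟨e.toEquiv, (mem_autA G).mpr fun a b => e.map_rel_iff, he⟩

lemma autA_fiber_const (htr : ∀ u v : V, ∃ e : G ≃g G, e u = v) (u v w : V) :
    ((autA G).filter (fun σ => σ u = v)).card
      = ((autA G).filter (fun σ => σ u = w)).card := by
  obtain ⟨τ, hτ, hτv⟩ := autA_trans G htr v w
  apply Finset.card_bij (fun σ _ => τ * σ)
  · intro σ hσ
    rw [mem_filter] at *
    exact ⟨autA_mul G hτ hσ.1, by rw [Equiv.Perm.mul_apply, hσ.2, hτv]⟩
  · intro σ₁ h₁ σ₂ h₂ h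
    exact mul_left_cancel h
  · intro ρ hρ
    rw [mem_filter] at hρ
    refine ⟨τ⁻¹ * ρ, mem_filter.mpr ⟨autA_mul G (autA_inv G hτ) hρ.1, ?_⟩, by group⟩
    rw [Equiv.Perm.mul_apply, hρ.2, ← hτv, Equiv.Perm.inv_apply_self]

lemma autA_fiber_card (htr : ∀ u v : V, ∃ e : G ≃g G, e u = v) (u v : V) :
    ((autA G).filter (fun σ => σ u = v)).card * Fintype.card V = (autA G).card := by
  have hpart : (autA G).card
      = ∑ x : V, ((autA G).filter (fun σ => σ u = x)).card :=
    Finset.card_eq_sum_card_fiberwise (fun σ _ => mem_univ (σ u))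
  rw [hpart]
  have : ∀ x : V, ((autA G).filter (fun σ => σ u = x)).card
      = ((autA G).filter (fun σ => σ u = v)).card := fun x => autA_fiber_const G htr u x v
  calc _ = ∑ _x : V, ((autA G).filter (fun σ => σ u = v)).card * 1 := by
        rw [Finset.sum_const, card_univ]; ring
    _ = ∑ x : V, ((autA G).filter (fun σ => σ u = x)).card := by
        refine sum_congr rfl fun x _ => ?_
        rw [mul_one, this x]

lemma autA_nonempty (htr : ∀ u v : V, ∃ e : G ≃g G, e u = v) : (autA G).Nonempty := by
  obtain ⟨σ, hσ, -⟩ := autA_trans G htr (Classical.arbitrary V) (Classical.arbitrary V)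
  exact ⟨σ, hσ⟩

end Trans

section Main
variable {V : Type*} [Fintype V] [DecidableEq V] [Nonempty V] (G : SimpleGraph V)

lemma aux_dist (htr : ∀ u v : V, ∃ e : G ≃g G, e u = v) :
    ∃ w : Finset V → ℝ,
      IsDomDistribution G w ((domNumber G : ℝ) / Fintype.card V) := by
  obtain ⟨D₀, hD₀, hcard⟩ := aux_domNumber_mem G
  have hAne := autA_nonempty G htr
  have hApos : (0:ℝ) < (autA G).card := by exact_mod_cast card_pos.mpr hAne
  have hn : (0:ℝ) < Fintype.card V := by exact_mod_cast Fintype.card_pos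
  refine ⟨fun D => (((autA G).filter (fun σ : Equiv.Perm V => D₀.image ⇑σ = D)).card : ℝ) / (autA G).card,
    fun D => by positivity, ?_, ?_, ?_⟩
  · -- sums to 1
    rw [← Finset.sum_div, div_eq_one_iff_eq (ne_of_gt hApos)]
    rw [← Nat.cast_sum]
    congr 1
    exact (Finset.card_eq_sum_card_fiberwise
      (f := fun σ : Equiv.Perm V => D₀.image ⇑σ) (fun σ _ => mem_univ _)).symm
  · -- supported on dominating sets
    intro D hD
    have : ((autA G).filter (fun σ : Equiv.Perm V => D₀.image ⇑σ = D)).Nonempty := by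
      by_contra h
      rw [Finset.not_nonempty_iff_eq_empty] at h
      simp [h] at hD
    obtain ⟨σ, hσ⟩ := this
    rw [mem_filter] at hσ
    obtain ⟨hσA, hσD⟩ := hσ
    intro v
    obtain ⟨u, hu, h⟩ := hD₀ (σ⁻¹ v)
    refine ⟨σ u, hσD ▸ Finset.mem_image_of_mem _ hu, ?_⟩
    rcases h with h | h
    · left; rw [h, Equiv.Perm.apply_inv_self]
    · right
      have := ((mem_autA G).mp hσA u (σ⁻¹ v)).mpr h
      rwa [Equiv.Perm.apply_inv_self] at this
  · -- marginals
    intro v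
    apply le_of_eq
    rw [← Finset.sum_div]
    rw [div_eq_div_iff hApos.ne' hn.ne', ← Nat.cast_sum]
    -- step 1: fiberwise over sets containing v
    have step1 : ∑ D ∈ univ.filter (fun D : Finset V => v ∈ D),
        ((autA G).filter (fun σ : Equiv.Perm V => D₀.image ⇑σ = D)).card
        = ((autA G).filter (fun σ : Equiv.Perm V => v ∈ D₀.image ⇑σ)).card := by
      rw [Finset.card_eq_sum_card_fiberwise
        (f := fun σ : Equiv.Perm V => D₀.image ⇑σ) (t := univ.filter (fun D : Finset V => v ∈ D))
        (fun σ hσ => by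
          rw [Finset.mem_coe, mem_filter] at hσ ⊢
          exact ⟨mem_univ _, hσ.2⟩)]
      refine sum_congr rfl fun D hD => ?_
      rw [mem_filter] at hD
      congr 1
      ext σ
      simp only [mem_filter]
      constructor
      · rintro ⟨hA, hE⟩; exact ⟨⟨hA, hE ▸ hD.2⟩, hE⟩
      · rintro ⟨⟨hA, _⟩, hE⟩; exact ⟨hA, hE⟩
    rw [step1]
    have step2 : ((autA G).filter (fun σ : Equiv.Perm V => v ∈ D₀.image ⇑σ)).card
        = ∑ u ∈ D₀, ((autA G).filter (fun σ => σ u = v)).card := by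
      rw [Finset.card_eq_sum_card_fiberwise (f := fun σ : Equiv.Perm V => σ⁻¹ v) (t := D₀)
        (fun σ hσ => by
          rw [Finset.mem_coe, mem_filter] at hσ
          obtain ⟨u, hu, huv⟩ := Finset.mem_image.mp hσ.2
          show σ⁻¹ v ∈ D₀
          rw [← huv, Equiv.Perm.inv_apply_self]
          exact hu)]
      refine sum_congr rfl fun u hu => ?_
      congr 1
      ext σ
      simp only [mem_filter]
      constructor
      · rintro ⟨⟨hA, _⟩, hE⟩
        exact ⟨hA, by rw [← hE, Equiv.Perm.apply_inv_self]⟩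
      · rintro ⟨hA, hE⟩
        exact ⟨⟨hA, Finset.mem_image.mpr ⟨u, hu, hE⟩⟩, by rw [← hE, Equiv.Perm.inv_apply_self]⟩
    rw [step2]
    push_cast
    rw [Finset.sum_mul]
    have hterm : ∀ u ∈ D₀,
        (((autA G).filter (fun σ => σ u = v)).card : ℝ) * (Fintype.card V : ℝ)
          = ((autA G).card : ℝ) := fun u _ => by exact_mod_cast autA_fiber_card G htr u v
    rw [Finset.sum_congr rfl hterm, Finset.sum_const, nsmul_eq_mul, hcard]

end Main

/-- For a nonempty graph `G` on `n` vertices with domination number `γ`, one has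
`fdom G ≤ n / γ`, with equality when `G` is vertex-transitive. -/
theorem fdom_le_card_div_domNumber {V : Type*} [Fintype V] [DecidableEq V] [Nonempty V]
    (G : SimpleGraph V) :
    fdom G ≤ (Fintype.card V : ℝ) / (domNumber G) ∧
      ((∀ u v : V, ∃ e : G ≃g G, e u = v) →
        fdom G = (Fintype.card V : ℝ) / (domNumber G)) := by
  have h1 : fdom G ≤ (Fintype.card V : ℝ) / (domNumber G) := by
    unfold fdom
    exact csSup_le ⟨1, aux_one_mem G⟩ (aux_bound G)
  refine ⟨h1, fun htr => le_antisymm h1 ?_⟩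
  have hγ : (0:ℝ) < domNumber G := Nat.cast_pos.mpr (aux_domNumber_pos G)
  have hn : (0:ℝ) < Fintype.card V := by exact_mod_cast Fintype.card_pos
  have hmem : (Fintype.card V : ℝ) / domNumber G ∈ {x : ℝ | ∃ p : ℝ, 0 < p ∧ p ≤ 1 ∧
      x = 1 / p ∧ ∃ w : Finset V → ℝ, IsDomDistribution G w p} :=
    ⟨(domNumber G : ℝ) / Fintype.card V, by positivity,
      (div_le_one hn).mpr (by exact_mod_cast aux_domNumber_le_card G),
      (one_div_div _ _).symm, aux_dist G htr⟩
  unfold fdom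
  exact le_csSup ⟨_, aux_bound G⟩ hmem
end

section
/- For all integers m ≥ n ≥ 2, the complete bipartite graph K_{m,n} satisfies fdom(K_{m,n}) = 1 + n(1 − 1/m). -/
open Finset
open scoped Classical

section Aux

variable {m n : ℕ}

/-- The dual certificate weights. -/
noncomputable def xval (m n : ℕ) : (Fin m ⊕ Fin n) → ℝ :=
  Sum.elim (fun _ => 1 / (m : ℝ)) (fun _ => 1 - 1 / (m : ℝ))

lemma xval_nonneg (hm : 1 ≤ m) (v : Fin m ⊕ Fin n) : 0 ≤ xval m n v := by
  have hm' : (1 : ℝ) ≤ m := by exact_mod_cast hm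
  cases v with
  | inl a =>
      simp only [xval, Sum.elim_inl]
      positivity
  | inr b =>
      simp only [xval, Sum.elim_inr]
      have : 1 / (m : ℝ) ≤ 1 := by
        rw [div_le_one (by linarith)]; linarith
      linarith

lemma key_dual (hn : 2 ≤ n) (hmn : n ≤ m) (D : Finset (Fin m ⊕ Fin n))
    (hD : IsDominatingSet (completeBipartiteGraph (Fin m) (Fin n)) D) :
    1 ≤ ∑ v ∈ D, xval m n v := by
  have hm2 : 2 ≤ m := le_trans hn hmn
  have hmR : (2 : ℝ) ≤ m := by exact_mod_cast hm2
  have hmPos : (0 : ℝ) < m := by linarith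
  have hm0 : (m : ℝ) ≠ 0 := ne_of_gt hmPos
  have hx0 : ∀ v ∈ D, 0 ≤ xval m n v := fun v _ => xval_nonneg (le_trans one_le_two hm2) v
  by_cases hL : ∃ i : Fin m, Sum.inl i ∈ D
  · by_cases hR : ∃ j : Fin n, Sum.inr j ∈ D
    · obtain ⟨i, hi⟩ := hL
      obtain ⟨j, hj⟩ := hR
      have hsub : ({Sum.inl i, Sum.inr j} : Finset (Fin m ⊕ Fin n)) ⊆ D := by
        intro v hv
        simp only [Finset.mem_insert, Finset.mem_singleton] at hv
        rcases hv with rfl | rfl <;> assumption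
      have hpair : ∑ v ∈ ({Sum.inl i, Sum.inr j} : Finset (Fin m ⊕ Fin n)), xval m n v = 1 := by
        rw [Finset.sum_pair (by simp)]
        simp [xval]
      calc (1 : ℝ) = ∑ v ∈ ({Sum.inl i, Sum.inr j} : Finset (Fin m ⊕ Fin n)), xval m n v :=
            hpair.symm
        _ ≤ ∑ v ∈ D, xval m n v :=
            Finset.sum_le_sum_of_subset_of_nonneg hsub (fun v hv _ => hx0 v hv)
    · -- no right vertex: all left vertices are in D
      push_neg at hR
      have hall : ∀ i : Fin m, Sum.inl i ∈ D := by
        intro i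
        obtain ⟨u, hu, h⟩ := hD (Sum.inl i)
        rcases h with rfl | hadj
        · exact hu
        · exfalso
          cases u with
          | inl a => simp at hadj
          | inr b => exact hR b hu
      have hsub : (Finset.univ.image (Sum.inl : Fin m → Fin m ⊕ Fin n)) ⊆ D := by
        intro v hv
        simp only [Finset.mem_image, Finset.mem_univ, true_and] at hv
        obtain ⟨i, rfl⟩ := hv
        exact hall i
      have hsum : ∑ v ∈ Finset.univ.image (Sum.inl : Fin m → Fin m ⊕ Fin n), xval m n v = 1 := by
        rw [Finset.sum_image (fun a _ b _ h => Sum.inl_injective h)]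
        simp only [xval, Sum.elim_inl, Finset.sum_const, Finset.card_univ, Fintype.card_fin,
          nsmul_eq_mul]
        field_simp
      calc (1 : ℝ) = ∑ v ∈ Finset.univ.image (Sum.inl : Fin m → Fin m ⊕ Fin n), xval m n v :=
            hsum.symm
        _ ≤ ∑ v ∈ D, xval m n v :=
            Finset.sum_le_sum_of_subset_of_nonneg hsub (fun v hv _ => hx0 v hv)
  · -- no left vertex: all right vertices are in D
    push_neg at hL
    have hall : ∀ j : Fin n, Sum.inr j ∈ D := by
      intro j
      obtain ⟨u, hu, h⟩ := hD (Sum.inr j)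
      rcases h with rfl | hadj
      · exact hu
      · exfalso
        cases u with
        | inl a => exact hL a hu
        | inr b => simp at hadj
    have hsub : (Finset.univ.image (Sum.inr : Fin n → Fin m ⊕ Fin n)) ⊆ D := by
      intro v hv
      simp only [Finset.mem_image, Finset.mem_univ, true_and] at hv
      obtain ⟨j, rfl⟩ := hv
      exact hall j
    have hnR : (2 : ℝ) ≤ n := by exact_mod_cast hn
    have hsum : ∑ v ∈ Finset.univ.image (Sum.inr : Fin n → Fin m ⊕ Fin n), xval m n v
        = n * (1 - 1/(m:ℝ)) := by
      rw [Finset.sum_image (fun a _ b _ h => Sum.inr_injective h)]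
      simp [xval, Finset.sum_const, Finset.card_univ, nsmul_eq_mul]
      ring
    have h12 : 1/(m:ℝ) ≤ 1/2 := by
      rw [div_le_div_iff₀ hmPos (by norm_num)]; linarith
    have : (1:ℝ) ≤ n * (1 - 1/(m:ℝ)) := by nlinarith
    calc (1 : ℝ) ≤ n * (1 - 1/(m:ℝ)) := this
      _ = ∑ v ∈ Finset.univ.image (Sum.inr : Fin n → Fin m ⊕ Fin n), xval m n v := hsum.symm
      _ ≤ ∑ v ∈ D, xval m n v :=
          Finset.sum_le_sum_of_subset_of_nonneg hsub (fun v hv _ => hx0 v hv)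

lemma upper_bound (hn : 2 ≤ n) (hmn : n ≤ m) (p : ℝ) (hp : 0 < p)
    (w : Finset (Fin m ⊕ Fin n) → ℝ)
    (hw : IsDomDistribution (completeBipartiteGraph (Fin m) (Fin n)) w p) :
    1 / p ≤ 1 + (n : ℝ) * (1 - 1 / (m : ℝ)) := by
  obtain ⟨h0, h1, hdom, hmar⟩ := hw
  have hm2 : 2 ≤ m := le_trans hn hmn
  have hmR : (2 : ℝ) ≤ m := by exact_mod_cast hm2
  have hm0 : (m : ℝ) ≠ 0 := by positivity
  have step1 : (1 : ℝ) ≤ ∑ D : Finset (Fin m ⊕ Fin n), w D * ∑ v ∈ D, xval m n v := by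
    rw [← h1]
    apply Finset.sum_le_sum
    intro D _
    by_cases hD : w D = 0
    · simp [hD]
    · exact le_mul_of_one_le_right (h0 D) (key_dual hn hmn D (hdom D hD))
  have step2 : ∑ D : Finset (Fin m ⊕ Fin n), w D * ∑ v ∈ D, xval m n v
      = ∑ v : Fin m ⊕ Fin n, (∑ D ∈ Finset.univ.filter (fun D : Finset (Fin m ⊕ Fin n) => v ∈ D), w D) * xval m n v := by
    calc ∑ D : Finset (Fin m ⊕ Fin n), w D * ∑ v ∈ D, xval m n v
        = ∑ D : Finset (Fin m ⊕ Fin n), ∑ v : Fin m ⊕ Fin n, (if v ∈ D then w D * xval m n v else 0) := by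
          apply Finset.sum_congr rfl
          intro D _
          rw [Finset.mul_sum, Finset.sum_ite_mem, Finset.univ_inter]
      _ = ∑ v : Fin m ⊕ Fin n, ∑ D : Finset (Fin m ⊕ Fin n), (if v ∈ D then w D * xval m n v else 0) := Finset.sum_comm
      _ = ∑ v : Fin m ⊕ Fin n, (∑ D ∈ Finset.univ.filter (fun D : Finset (Fin m ⊕ Fin n) => v ∈ D), w D) * xval m n v := by
          apply Finset.sum_congr rfl
          intro v _
          rw [← Finset.sum_filter, ← Finset.sum_mul]
  have step3 : ∑ v : Fin m ⊕ Fin n, (∑ D ∈ Finset.univ.filter (fun D : Finset (Fin m ⊕ Fin n) => v ∈ D), w D) * xval m n v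
      ≤ ∑ v : Fin m ⊕ Fin n, p * xval m n v := by
    apply Finset.sum_le_sum
    intro v _
    exact mul_le_mul_of_nonneg_right (hmar v) (xval_nonneg (by omega) v)
  have step4 : ∑ v : Fin m ⊕ Fin n, p * xval m n v = p * (1 + (n : ℝ) * (1 - 1 / (m : ℝ))) := by
    rw [← Finset.mul_sum]
    congr 1
    rw [Fintype.sum_sum_type]
    simp only [xval, Sum.elim_inl, Sum.elim_inr, Finset.sum_const, Finset.card_univ,
      Fintype.card_fin, nsmul_eq_mul]
    field_simp
  have hfinal : (1 : ℝ) ≤ p * (1 + (n : ℝ) * (1 - 1 / (m : ℝ))) := by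
    calc (1:ℝ) ≤ _ := step1
      _ = _ := step2
      _ ≤ _ := step3
      _ = _ := step4
  rw [div_le_iff₀ hp]
  linarith [hfinal]


/-- The explicit optimal distribution: weight `p/m` on each pair `{inl i, inr j}`
and weight `p (1 - n/m)` on the full left side. -/
noncomputable def wdist (m n : ℕ) (p : ℝ) : Finset (Fin m ⊕ Fin n) → ℝ := fun D =>
  p / m * (∑ i : Fin m, ∑ j : Fin n,
      if D = ({Sum.inl i, Sum.inr j} : Finset (Fin m ⊕ Fin n)) then 1 else 0)
  + p * (1 - n / m) *
      (if D = Finset.univ.image (Sum.inl : Fin m → Fin m ⊕ Fin n) then 1 else 0)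

lemma collapse1 (A : Finset (Fin m ⊕ Fin n)) (c : ℝ) :
    ∑ D : Finset (Fin m ⊕ Fin n), (if D = A then c else 0) = c := by
  rw [Finset.sum_ite_eq' Finset.univ A (fun _ => c)]
  simp

lemma collapse2 (v : Fin m ⊕ Fin n) (A : Finset (Fin m ⊕ Fin n)) (c : ℝ) :
    ∑ D : Finset (Fin m ⊕ Fin n), (if v ∈ D then (if D = A then c else 0) else 0)
      = if v ∈ A then c else 0 := by
  have h : ∀ D : Finset (Fin m ⊕ Fin n),
      (if v ∈ D then (if D = A then c else 0) else 0)
        = (if D = A then (if v ∈ A then c else 0) else 0) := by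
    intro D
    by_cases hDA : D = A
    · subst hDA; by_cases hv : v ∈ D <;> simp [hv]
    · simp [hDA]
  rw [Finset.sum_congr rfl (fun D _ => h D)]
  exact collapse1 A _

lemma swap3 (f : Finset (Fin m ⊕ Fin n) → Fin m → Fin n → ℝ) :
    ∑ D : Finset (Fin m ⊕ Fin n), ∑ i : Fin m, ∑ j : Fin n, f D i j
      = ∑ i : Fin m, ∑ j : Fin n, ∑ D : Finset (Fin m ⊕ Fin n), f D i j := by
  rw [Finset.sum_comm]
  exact Finset.sum_congr rfl fun i _ => Finset.sum_comm

lemma wdist_nonneg (hmn : n ≤ m) (p : ℝ) (hp : 0 ≤ p) (D : Finset (Fin m ⊕ Fin n)) :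
    0 ≤ wdist m n p D := by
  have h1 : (n : ℝ) ≤ m := by exact_mod_cast hmn
  have h2 : (0:ℝ) ≤ 1 - n / m := by
    rcases Nat.eq_zero_or_pos m with hm | hm
    · subst hm; simp
    · have : (0:ℝ) < m := by exact_mod_cast hm
      rw [sub_nonneg, div_le_one this]; exact h1
  unfold wdist
  have hA : (0:ℝ) ≤ ∑ i : Fin m, ∑ j : Fin n,
      if D = ({Sum.inl i, Sum.inr j} : Finset (Fin m ⊕ Fin n)) then (1:ℝ) else 0 := by
    apply Finset.sum_nonneg; intro i _
    apply Finset.sum_nonneg; intro j _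
    positivity
  have hB : (0:ℝ) ≤ if D = Finset.univ.image (Sum.inl : Fin m → Fin m ⊕ Fin n) then (1:ℝ) else 0 := by
    positivity
  have hpm : (0:ℝ) ≤ p / m := by positivity
  have := mul_nonneg hpm hA
  have := mul_nonneg (mul_nonneg hp h2) hB
  linarith

lemma wdist_sum (hn : 2 ≤ n) (hmn : n ≤ m) (p : ℝ) :
    ∑ D : Finset (Fin m ⊕ Fin n), wdist m n p D = p * (1 + (n:ℝ) * (1 - 1/(m:ℝ))) := by
  have hm2 : 2 ≤ m := le_trans hn hmn
  have hm0 : (m : ℝ) ≠ 0 := by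
    have : (2:ℝ) ≤ m := by exact_mod_cast hm2
    linarith
  unfold wdist
  rw [Finset.sum_add_distrib, ← Finset.mul_sum, ← Finset.mul_sum]
  rw [swap3]
  have h1 : ∀ i : Fin m, ∀ j : Fin n, ∑ D : Finset (Fin m ⊕ Fin n),
      (if D = ({Sum.inl i, Sum.inr j} : Finset (Fin m ⊕ Fin n)) then (1:ℝ) else 0) = 1 :=
    fun i j => collapse1 _ _
  rw [Finset.sum_congr rfl (fun i _ => Finset.sum_congr rfl (fun j _ => h1 i j))]
  rw [collapse1]
  simp only [Finset.sum_const, Finset.card_univ, Fintype.card_fin, nsmul_eq_mul, mul_one]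
  field_simp
  ring

lemma wdist_dom (hn : 2 ≤ n) (hmn : n ≤ m) (p : ℝ) (hp : 0 < p)
    (D : Finset (Fin m ⊕ Fin n)) (hD : wdist m n p D ≠ 0) :
    IsDominatingSet (completeBipartiteGraph (Fin m) (Fin n)) D := by
  have hm2 : 2 ≤ m := le_trans hn hmn
  have hshape : (∃ i j, D = ({Sum.inl i, Sum.inr j} : Finset (Fin m ⊕ Fin n)))
      ∨ D = Finset.univ.image (Sum.inl : Fin m → Fin m ⊕ Fin n) := by
    by_contra hc
    push_neg at hc
    obtain ⟨hpair, hL⟩ := hc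
    apply hD
    unfold wdist
    have h1 : ∑ i : Fin m, ∑ j : Fin n,
        (if D = ({Sum.inl i, Sum.inr j} : Finset (Fin m ⊕ Fin n)) then (1:ℝ) else 0) = 0 := by
      apply Finset.sum_eq_zero; intro i _
      apply Finset.sum_eq_zero; intro j _
      exact if_neg (hpair i j)
    rw [h1, if_neg hL]
    ring
  rcases hshape with ⟨i, j, rfl⟩ | rfl
  · intro v
    cases v with
    | inl a =>
        refine ⟨Sum.inr j, by simp, Or.inr ?_⟩
        simp
    | inr b =>
        refine ⟨Sum.inl i, by simp, Or.inr ?_⟩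
        simp
  · intro v
    cases v with
    | inl a => exact ⟨Sum.inl a, by simp, Or.inl rfl⟩
    | inr b =>
        refine ⟨Sum.inl ⟨0, by omega⟩, by simp, Or.inr ?_⟩
        simp

lemma wdist_marginal (hn : 2 ≤ n) (hmn : n ≤ m) (p : ℝ) (v : Fin m ⊕ Fin n) :
    ∑ D ∈ Finset.univ.filter (fun D : Finset (Fin m ⊕ Fin n) => v ∈ D), wdist m n p D = p := by
  have hm2 : 2 ≤ m := le_trans hn hmn
  have hm0 : (m : ℝ) ≠ 0 := by
    have : (2:ℝ) ≤ m := by exact_mod_cast hm2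
    linarith
  rw [Finset.sum_filter]
  have point : ∀ D : Finset (Fin m ⊕ Fin n),
      (if v ∈ D then wdist m n p D else 0)
        = p / m * (∑ i : Fin m, ∑ j : Fin n,
            (if v ∈ D then (if D = ({Sum.inl i, Sum.inr j} : Finset (Fin m ⊕ Fin n)) then (1:ℝ)
              else 0) else 0))
          + p * (1 - n / m) *
            (if v ∈ D then
              (if D = Finset.univ.image (Sum.inl : Fin m → Fin m ⊕ Fin n) then (1:ℝ) else 0)
              else 0) := by
    intro D
    by_cases h : v ∈ D <;> simp [wdist, h]
  rw [Finset.sum_congr rfl (fun D _ => point D)]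
  rw [Finset.sum_add_distrib, ← Finset.mul_sum, ← Finset.mul_sum]
  rw [swap3]
  rw [Finset.sum_congr rfl (fun i _ => Finset.sum_congr rfl (fun j _ => collapse2 v _ _))]
  rw [collapse2]
  cases v with
  | inl a =>
      have h1 : ∀ i : Fin m, ∀ j : Fin n,
          ((if Sum.inl a ∈ ({Sum.inl i, Sum.inr j} : Finset (Fin m ⊕ Fin n)) then (1:ℝ) else 0))
            = if i = a then 1 else 0 := by
        intro i j
        by_cases h : i = a
        · subst h; simp
        · rw [if_neg h, if_neg]
          simp only [Finset.mem_insert, Finset.mem_singleton]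
          push_neg
          exact ⟨fun hc => h (Sum.inl_injective hc).symm, by simp⟩
      rw [Finset.sum_congr rfl (fun i _ => Finset.sum_congr rfl (fun j _ => h1 i j))]
      have h2 : Sum.inl a ∈ Finset.univ.image (Sum.inl : Fin m → Fin m ⊕ Fin n) := by simp
      rw [if_pos h2]
      simp only [Finset.sum_const, Finset.card_univ, Fintype.card_fin, nsmul_eq_mul, mul_one,
        mul_ite, mul_zero]
      rw [Finset.sum_ite_eq' Finset.univ a (fun _ => (n:ℝ))]
      simp only [Finset.mem_univ, if_pos]
      field_simp
      ring
  | inr b =>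
      have h1 : ∀ i : Fin m, ∀ j : Fin n,
          ((if Sum.inr b ∈ ({Sum.inl i, Sum.inr j} : Finset (Fin m ⊕ Fin n)) then (1:ℝ) else 0))
            = if j = b then 1 else 0 := by
        intro i j
        by_cases h : j = b
        · subst h; simp
        · rw [if_neg h, if_neg]
          simp only [Finset.mem_insert, Finset.mem_singleton]
          push_neg
          exact ⟨by simp, fun hc => h (Sum.inr_injective hc).symm⟩
      rw [Finset.sum_congr rfl (fun i _ => Finset.sum_congr rfl (fun j _ => h1 i j))]
      have h2 : Sum.inr b ∉ Finset.univ.image (Sum.inl : Fin m → Fin m ⊕ Fin n) := by simp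
      rw [if_neg h2]
      have h3 : ∀ i : Fin m, ∑ j : Fin n, (if j = b then (1:ℝ) else 0) = 1 := by
        intro i
        rw [Finset.sum_ite_eq' Finset.univ b (fun _ => (1:ℝ))]
        simp
      rw [Finset.sum_congr rfl (fun i _ => h3 i)]
      simp only [Finset.sum_const, Finset.card_univ, Fintype.card_fin, nsmul_eq_mul, mul_one,
        mul_zero, add_zero]
      field_simp

end Aux

/-- For integers `m ≥ n ≥ 2`, the complete bipartite graph `K_{m,n}` has fractional domatic
number `1 + n (1 - 1/m)`. -/
theorem fdom_completeBipartiteGraph (m n : ℕ) (hn : 2 ≤ n) (hmn : n ≤ m) :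
    fdom (completeBipartiteGraph (Fin m) (Fin n)) = 1 + (n : ℝ) * (1 - 1 / (m : ℝ)) := by
  have hm2 : 2 ≤ m := le_trans hn hmn
  have hmR : (2:ℝ) ≤ m := by exact_mod_cast hm2
  have hnR : (2:ℝ) ≤ n := by exact_mod_cast hn
  set t : ℝ := 1 + (n : ℝ) * (1 - 1 / (m : ℝ)) with ht_def
  have h1m : 1/(m:ℝ) ≤ 1/2 := by
    rw [div_le_div_iff₀ (by linarith) (by norm_num)]; linarith
  have ht1 : 1 ≤ t := by
    have : (0:ℝ) ≤ (n:ℝ) * (1 - 1/(m:ℝ)) := by nlinarith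
    simp only [ht_def]; linarith
  have ht0 : 0 < t := by linarith
  have hub : ∀ x ∈ {x : ℝ | ∃ p : ℝ, 0 < p ∧ p ≤ 1 ∧ x = 1 / p ∧
      ∃ w : Finset (Fin m ⊕ Fin n) → ℝ,
        IsDomDistribution (completeBipartiteGraph (Fin m) (Fin n)) w p}, x ≤ t := by
    rintro x ⟨p, hp, _, rfl, w, hw⟩
    exact upper_bound hn hmn p hp w hw
  have hmem : t ∈ {x : ℝ | ∃ p : ℝ, 0 < p ∧ p ≤ 1 ∧ x = 1 / p ∧
      ∃ w : Finset (Fin m ⊕ Fin n) → ℝ,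
        IsDomDistribution (completeBipartiteGraph (Fin m) (Fin n)) w p} := by
    refine ⟨1/t, by positivity, ?_, ?_, wdist m n (1/t), ?_⟩
    · rw [div_le_one ht0]; linarith
    · rw [one_div_one_div]
    · refine ⟨fun D => wdist_nonneg hmn (1/t) (by positivity) D, ?_, ?_, ?_⟩
      · rw [wdist_sum hn hmn, ← ht_def]
        field_simp
      · exact fun D hD => wdist_dom hn hmn (1/t) (by positivity) D hD
      · exact fun v => le_of_eq (wdist_marginal hn hmn (1/t) v)
  unfold fdom
  exact le_antisymm (csSup_le ⟨t, hmem⟩ hub) (le_csSup ⟨t, hub⟩ hmem)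
end

section
/- For all integers d, m, n with 1 ≤ d < n and 1 ≤ m ≤ n − d, the graph H_{n,d} satisfies fdom(H_{n,d}) ≤ n/m + C(n,d)/C(n−m,d), where C(a,b) denotes the binomial coefficient. (This is the quantitative bound underlying the fact that for n = d(q+1) with q ≥ ln d, fdom(H_{n,d}) ≤ (1+o(1))·d/ln d as d → ∞.) -/
open Finset
open scoped Classical

/-- The incidence graph `H_{n,d}` of the complete `d`-uniform hypergraph on `n` vertices:
parts `A = Fin n` and `B` = the `d`-element subsets of `A`, with `a ∈ A` adjacent to
`b ∈ B` iff `a ∈ b`. -/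
def Hnd (n d : ℕ) : SimpleGraph (Fin n ⊕ {s : Finset (Fin n) // s.card = d}) :=
  SimpleGraph.fromRel (fun x y =>
    match x, y with
    | .inl a, .inr b => a ∈ b.1
    | _, _ => False)

abbrev Vnd (n d : ℕ) := Fin n ⊕ {s : Finset (Fin n) // s.card = d}

/-- Quantitative upper bound on the fractional domatic number of `H_{n,d}`:
for `1 ≤ d < n` and `1 ≤ m ≤ n - d`, `fdom (H_{n,d}) ≤ n/m + C(n,d)/C(n-m,d)`. -/
theorem fdom_Hnd_le (n d m : ℕ) (hd : 1 ≤ d) (hdn : d < n) (hm : 1 ≤ m) (hmn : m ≤ n - d) :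
    fdom (Hnd n d) ≤ (n : ℝ) / (m : ℝ) + (Nat.choose n d : ℝ) / (Nat.choose (n - m) d : ℝ) := by
  have hdm : d ≤ n - m := by omega
  have hKpos : 0 < Nat.choose (n - m) d := Nat.choose_pos hdm
  have hKR : (0:ℝ) < (Nat.choose (n - m) d : ℝ) := by exact_mod_cast hKpos
  have hmR : (0:ℝ) < (m : ℝ) := by exact_mod_cast hm
  have hRHS : (0:ℝ) ≤ (n : ℝ) / (m : ℝ) + (Nat.choose n d : ℝ) / (Nat.choose (n - m) d : ℝ) := by
    positivity
  apply Real.sSup_le _ hRHS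
  rintro x ⟨p, hp0, hp1, rfl, w, hw0, hwsum, hwdom, hwmarg⟩
  rw [div_le_iff₀ hp0]
  set cA : Finset (Vnd n d) → ℕ := fun D => (univ.filter (fun a : Fin n => Sum.inl a ∈ D)).card with hcA
  set cB : Finset (Vnd n d) → ℕ :=
    fun D => (univ.filter (fun b : {s : Finset (Fin n) // s.card = d} => Sum.inr b ∈ D)).card
    with hcB
  -- key combinatorial claim
  have key : ∀ D : Finset (Vnd n d), IsDominatingSet (Hnd n d) D → cA D < m →
      Nat.choose (n - m) d ≤ cB D := by
    intro D hdom hlt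
    set X : Finset (Fin n) := univ.filter (fun a : Fin n => Sum.inl a ∈ D) with hX
    set S : Finset {s : Finset (Fin n) // s.card = d} :=
      univ.filter (fun b : {s : Finset (Fin n) // s.card = d} => b.1 ⊆ Xᶜ) with hS
    have hScard : S.card = Nat.choose (n - X.card) d := by
      have : S.card = (Xᶜ.powersetCard d).card := by
        apply Finset.card_bij (fun b _ => b.1)
        · intro b hb
          rw [Finset.mem_powersetCard]
          exact ⟨(Finset.mem_filter.1 hb).2, b.2⟩
        · intro b1 _ b2 _ h
          exact Subtype.ext h
        · intro s hs
          rw [Finset.mem_powersetCard] at hs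
          exact ⟨⟨s, hs.2⟩, Finset.mem_filter.2 ⟨Finset.mem_univ _, hs.1⟩, rfl⟩
      rw [this, Finset.card_powersetCard, Finset.card_compl, Fintype.card_fin]
    have hSsub : S ⊆ univ.filter
        (fun b : {s : Finset (Fin n) // s.card = d} => Sum.inr b ∈ D) := by
      intro b hb
      have hbX : b.1 ⊆ Xᶜ := (Finset.mem_filter.1 hb).2
      obtain ⟨u, huD, hu⟩ := hdom (Sum.inr b)
      refine Finset.mem_filter.2 ⟨Finset.mem_univ _, ?_⟩
      rcases hu with h | h
      · rwa [h] at huD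
      · rw [Hnd, SimpleGraph.fromRel_adj] at h
        obtain ⟨-, h | h⟩ := h
        · match u, huD, h with
          | Sum.inl a, huD, h =>
            exfalso
            have haX : a ∈ X := Finset.mem_filter.2 ⟨Finset.mem_univ _, huD⟩
            exact (Finset.mem_compl.1 (hbX h)) haX
          | Sum.inr b', _, h => exact h.elim
        · match u, h with
          | Sum.inl a, h => exact h.elim
          | Sum.inr b', h => exact h.elim
    calc Nat.choose (n - m) d ≤ Nat.choose (n - X.card) d := by
          apply Nat.choose_le_choose
          have : X.card = cA D := rfl
          omega
      _ = S.card := hScard.symm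
      _ ≤ cB D := Finset.card_le_card hSsub
  -- per-set inequality
  have claim1 : ∀ D : Finset (Vnd n d), w D ≠ 0 →
      (1:ℝ) ≤ (cA D : ℝ) / m + (cB D : ℝ) / (Nat.choose (n - m) d : ℝ) := by
    intro D hD
    by_cases hcase : m ≤ cA D
    · have h1 : (1:ℝ) ≤ (cA D : ℝ) / m := by
        rw [le_div_iff₀ hmR, one_mul]
        exact_mod_cast hcase
      have h2 : (0:ℝ) ≤ (cB D : ℝ) / (Nat.choose (n - m) d : ℝ) := by positivity
      linarith
    · push_neg at hcase
      have hk := key D (hwdom D hD) hcase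
      have h1 : (1:ℝ) ≤ (cB D : ℝ) / (Nat.choose (n - m) d : ℝ) := by
        rw [le_div_iff₀ hKR, one_mul]
        exact_mod_cast hk
      have h2 : (0:ℝ) ≤ (cA D : ℝ) / m := by positivity
      linarith
  -- marginal sums
  have swapA : ∀ c : Vnd n d, ∑ D : Finset (Vnd n d), (if c ∈ D then w D else 0) ≤ p := by
    intro c
    rw [← Finset.sum_filter]
    exact hwmarg c
  have sumA : ∑ D : Finset (Vnd n d), w D * (cA D : ℝ) ≤ (n : ℝ) * p := by
    have e1 : ∀ D : Finset (Vnd n d), w D * (cA D : ℝ)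
        = ∑ a : Fin n, (if Sum.inl a ∈ D then w D else 0) := by
      intro D
      rw [← Finset.sum_filter, Finset.sum_const, nsmul_eq_mul, mul_comm]
    calc ∑ D : Finset (Vnd n d), w D * (cA D : ℝ)
        = ∑ D : Finset (Vnd n d), ∑ a : Fin n, (if Sum.inl a ∈ D then w D else 0) := by
          exact Finset.sum_congr rfl fun D _ => e1 D
      _ = ∑ a : Fin n, ∑ D : Finset (Vnd n d), (if Sum.inl a ∈ D then w D else 0) :=
          Finset.sum_comm
      _ ≤ ∑ _a : Fin n, p := Finset.sum_le_sum fun a _ => swapA (Sum.inl a)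
      _ = (n : ℝ) * p := by simp [mul_comm]
  have sumB : ∑ D : Finset (Vnd n d), w D * (cB D : ℝ) ≤ (Nat.choose n d : ℝ) * p := by
    have e1 : ∀ D : Finset (Vnd n d), w D * (cB D : ℝ)
        = ∑ b : {s : Finset (Fin n) // s.card = d}, (if Sum.inr b ∈ D then w D else 0) := by
      intro D
      rw [← Finset.sum_filter, Finset.sum_const, nsmul_eq_mul, mul_comm]
    calc ∑ D : Finset (Vnd n d), w D * (cB D : ℝ)
        = ∑ D : Finset (Vnd n d), ∑ b : {s : Finset (Fin n) // s.card = d},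
            (if Sum.inr b ∈ D then w D else 0) := Finset.sum_congr rfl fun D _ => e1 D
      _ = ∑ b : {s : Finset (Fin n) // s.card = d}, ∑ D : Finset (Vnd n d),
            (if Sum.inr b ∈ D then w D else 0) := Finset.sum_comm
      _ ≤ ∑ _b : {s : Finset (Fin n) // s.card = d}, p :=
          Finset.sum_le_sum fun b _ => swapA (Sum.inr b)
      _ = (Nat.choose n d : ℝ) * p := by
          rw [Finset.sum_const, nsmul_eq_mul, Finset.card_univ, Fintype.card_finset_len,
            Fintype.card_fin]
  -- assemble
  have h1 : (1:ℝ) ≤ ∑ D : Finset (Vnd n d),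
      w D * ((cA D : ℝ) / m + (cB D : ℝ) / (Nat.choose (n - m) d : ℝ)) := by
    rw [← hwsum]
    apply Finset.sum_le_sum
    intro D _
    by_cases h : w D = 0
    · simp [h]
    · exact le_mul_of_one_le_right (hw0 D) (claim1 D h)
  have h2 : ∑ D : Finset (Vnd n d),
      w D * ((cA D : ℝ) / m + (cB D : ℝ) / (Nat.choose (n - m) d : ℝ))
      = (∑ D : Finset (Vnd n d), w D * (cA D : ℝ)) / m
        + (∑ D : Finset (Vnd n d), w D * (cB D : ℝ)) / (Nat.choose (n - m) d : ℝ) := by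
    rw [Finset.sum_div, Finset.sum_div, ← Finset.sum_add_distrib]
    exact Finset.sum_congr rfl fun D _ => by ring
  calc (1:ℝ) ≤ (∑ D : Finset (Vnd n d), w D * (cA D : ℝ)) / m
        + (∑ D : Finset (Vnd n d), w D * (cB D : ℝ)) / (Nat.choose (n - m) d : ℝ) := by
        rw [← h2]; exact h1
    _ ≤ ((n : ℝ) * p) / m + ((Nat.choose n d : ℝ) * p) / (Nat.choose (n - m) d : ℝ) := by
        gcongr
    _ = ((n : ℝ) / m + (Nat.choose n d : ℝ) / (Nat.choose (n - m) d : ℝ)) * p := by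
        ring
end

section
/- Let q0, d ≥ 1 be integers and let n be an integer with n > d and n ≥ (d−1)·C(2q0+1, q0) + 1, where C(a,b) denotes the binomial coefficient. Then for all integers p, q with 1 ≤ q ≤ q0 and p > 2q, the graph H_{n,d} admits no dominating (p:q)-colouring. -/
open Finset
open scoped Classical

/-- A dominating `(p:q)`-colouring of `G`: each vertex gets a `q`-element subset of the `p`
colours, and every closed neighbourhood sees all `p` colours. -/
def IsDomPQColouring {V : Type*} (G : SimpleGraph V) (p q : ℕ) (φ : V → Finset (Fin p)) :
    Prop :=
  (∀ v, (φ v).card = q) ∧ ∀ v : V, ∀ c : Fin p, ∃ u : V, (u = v ∨ G.Adj u v) ∧ c ∈ φ u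

lemma choose_central_mono : Monotone fun k => Nat.choose (2 * k + 1) k := by
  apply monotone_nat_of_le_succ
  intro k
  have h1 : Nat.choose (2 * k + 1) k ≤ Nat.choose (2 * k + 2) k :=
    Nat.choose_le_choose k (by omega)
  have h2 : Nat.choose (2 * k + 2 + 1) (k + 1)
      = Nat.choose (2 * k + 2) k + Nat.choose (2 * k + 2) (k + 1) :=
    Nat.choose_succ_succ _ _
  have h3 : 2 * (k + 1) + 1 = 2 * k + 2 + 1 := by omega
  simp only [h3]
  omega

/-- If `n ≥ (d-1)·C(2q₀+1, q₀) + 1` then `H_{n,d}` has no dominating `(p:q)`-colouring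
for any `q ≤ q₀` and `p > 2q`. -/
theorem no_domPQColouring_Hnd (q₀ d n : ℕ) (hq₀ : 1 ≤ q₀) (hd : 1 ≤ d) (hdn : d < n)
    (hn : (d - 1) * Nat.choose (2 * q₀ + 1) q₀ + 1 ≤ n)
    (p q : ℕ) (hq : 1 ≤ q) (hqq₀ : q ≤ q₀) (hp : 2 * q < p) :
    ¬ ∃ φ : (Fin n ⊕ {s : Finset (Fin n) // s.card = d}) → Finset (Fin p),
        IsDomPQColouring (Hnd n d) p q φ := by
  rintro ⟨φ, hcard, hdom⟩
  have hp3 : 2 * q + 1 ≤ p := hp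
  set W : Finset (Fin p) := Finset.univ.map (Fin.castLEEmb hp3) with hWdef
  have hWcard : W.card = 2 * q + 1 := by
    simp [hWdef]
  have hkey : ∀ a : Fin n, ∃ R : Finset (Fin p),
      R ⊆ W \ φ (Sum.inl a) ∧ R.card = q + 1 := by
    intro a
    refine Finset.exists_subset_card_eq ?_
    have h1 := Finset.le_card_sdiff (φ (Sum.inl a)) W
    have h2 := hcard (Sum.inl a)
    omega
  choose g hg1 hg2 using hkey
  have hmaps : ∀ a ∈ (Finset.univ : Finset (Fin n)), g a ∈ W.powersetCard (q + 1) := by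
    intro a _
    rw [Finset.mem_powersetCard]
    exact ⟨(hg1 a).trans Finset.sdiff_subset, hg2 a⟩
  have hlt : (W.powersetCard (q + 1)).card * (d - 1)
      < (Finset.univ : Finset (Fin n)).card := by
    rw [Finset.card_powersetCard, hWcard, Finset.card_univ, Fintype.card_fin]
    have h1 : Nat.choose (2 * q + 1) (q + 1) = Nat.choose (2 * q + 1) q := by
      have h := Nat.choose_symm (show q ≤ 2 * q + 1 by omega)
      have he : 2 * q + 1 - q = q + 1 := by omega
      rwa [he] at h
    have h2 : Nat.choose (2 * q + 1) q ≤ Nat.choose (2 * q₀ + 1) q₀ :=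
      choose_central_mono hqq₀
    calc Nat.choose (2 * q + 1) (q + 1) * (d - 1)
        ≤ Nat.choose (2 * q₀ + 1) q₀ * (d - 1) := by
          rw [h1]; exact Nat.mul_le_mul_right _ h2
      _ < n := by
          have := Nat.mul_comm (d - 1) (Nat.choose (2 * q₀ + 1) q₀)
          omega
  obtain ⟨R, hR, hRd⟩ :=
    Finset.exists_lt_card_fiber_of_mul_lt_card_of_maps_to hmaps hlt
  obtain ⟨s, hs, hscard⟩ := Finset.exists_subset_card_eq (s := Finset.filter (fun x => g x = R) Finset.univ) (n := d) (by omega)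
  set b : {s : Finset (Fin n) // s.card = d} := ⟨s, hscard⟩ with hbdef
  set v : Fin n ⊕ {s : Finset (Fin n) // s.card = d} := Sum.inr b with hvdef
  have hRcard : R.card = q + 1 := (Finset.mem_powersetCard.mp hR).2
  have hc : ∃ c ∈ R, c ∉ φ v := by
    by_contra h
    push_neg at h
    have hsub : R ⊆ φ v := h
    have := Finset.card_le_card hsub
    rw [hRcard, hcard v] at this
    omega
  obtain ⟨c, hcR, hcv⟩ := hc
  obtain ⟨u, hu, hcu⟩ := hdom v c
  rcases hu with rfl | hadj
  · exact hcv hcu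
  · rw [Hnd, SimpleGraph.fromRel_adj] at hadj
    obtain ⟨-, hrel⟩ := hadj
    rcases u with a | b'
    · have ha : a ∈ s := by
        rcases hrel with h | h
        · exact h
        · exact absurd h (by simp)
      have hga : g a = R := by
        have := hs ha
        simpa using (Finset.mem_filter.mp this).2
      have : c ∈ W \ φ (Sum.inl a) := hg1 a (hga ▸ hcR)
      exact (Finset.mem_sdiff.mp this).2 hcu
    · rcases hrel with h | h <;> exact absurd h (by simp)
end

section
/- If a finite simple graph G contains a hammock, then fdom(G) ≤ 5/2; that is, for every finitely supported probability distribution over the dominating sets of G, some vertex belongs to the random dominating set with probability at least 2/5. -/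
open Finset
open scoped Classical

/-- `G` contains a hammock: a suspended 2-path `u – z – v` and a suspended 3-path
`u – x – y – v` between two non-adjacent vertices `u, v` of degree at least 3,
all internal vertices having degree 2. -/
def HasHammock {V : Type*} [Fintype V] [DecidableEq V] (G : SimpleGraph V) : Prop :=
  ∃ u v x y z : V, ([u, v, x, y, z] : List V).Nodup ∧ ¬ G.Adj u v ∧
    G.Adj u x ∧ G.Adj x y ∧ G.Adj y v ∧ G.Adj u z ∧ G.Adj z v ∧
    3 ≤ G.degree u ∧ 3 ≤ G.degree v ∧
    G.degree x = 2 ∧ G.degree y = 2 ∧ G.degree z = 2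

lemma adj_eq_of_degree_two {V : Type*} [Fintype V] [DecidableEq V] (G : SimpleGraph V)
    (x a b t : V) (hdeg : G.degree x = 2) (hab : a ≠ b)
    (ha : G.Adj a x) (hb : G.Adj b x) (ht : G.Adj t x) : t = a ∨ t = b := by
  have hsub : ({a, b} : Finset V) ⊆ G.neighborFinset x := by
    intro s hs
    simp only [Finset.mem_insert, Finset.mem_singleton] at hs
    rcases hs with rfl | rfl
    · simpa [SimpleGraph.mem_neighborFinset] using ha.symm
    · simpa [SimpleGraph.mem_neighborFinset] using hb.symm
  have hcard : ({a, b} : Finset V).card = 2 := by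
    rw [Finset.card_insert_of_notMem (by simp [hab]), Finset.card_singleton]
  have heq : ({a, b} : Finset V) = G.neighborFinset x :=
    Finset.eq_of_subset_of_card_le hsub (by
      rw [hcard]
      rw [SimpleGraph.card_neighborFinset_eq_degree, hdeg])
  have : t ∈ G.neighborFinset x := by
    simpa [SimpleGraph.mem_neighborFinset] using ht.symm
  rw [← heq] at this
  simpa using this


set_option maxHeartbeats 1000000 in
/-- If `G` contains a hammock then `fdom G ≤ 5/2`; that is, under every finitely supported
probability distribution over the dominating sets of `G`, some vertex belongs to the random
dominating set with probability at least `2/5`. -/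
theorem fdom_le_five_halves_of_hasHammock {V : Type*} [Fintype V] [DecidableEq V]
    (G : SimpleGraph V) (h : HasHammock G) :
    fdom G ≤ 5 / 2 ∧
      ∀ w : Finset V → ℝ, (∀ D, 0 ≤ w D) → (∑ D : Finset V, w D) = 1 →
        (∀ D, w D ≠ 0 → IsDominatingSet G D) →
        ∃ v : V, (2 / 5 : ℝ) ≤
          ∑ D ∈ Finset.univ.filter (fun D : Finset V => v ∈ D), w D := by
  have key : ∀ w : Finset V → ℝ, (∀ D, 0 ≤ w D) → (∑ D : Finset V, w D) = 1 →
      (∀ D, w D ≠ 0 → IsDominatingSet G D) →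
      ∃ v : V, (2 / 5 : ℝ) ≤
        ∑ D ∈ Finset.univ.filter (fun D : Finset V => v ∈ D), w D := by
    obtain ⟨u, v, x, y, z, hnd, huv, hux, hxy, hyv, huz, hzv, _, _, hdx, hdy, hdz⟩ := h
    intro w hw0 hw1 hwdom
    have hne : u ≠ v ∧ u ≠ x ∧ u ≠ y ∧ u ≠ z ∧ v ≠ x ∧ v ≠ y ∧ v ≠ z ∧ x ≠ y ∧ x ≠ z ∧ y ≠ z := by
      simp only [List.nodup_cons, List.mem_cons, List.mem_singleton, List.not_mem_nil,
        or_false, not_or, List.nodup_nil, and_true] at hnd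
      tauto
    obtain ⟨h1, h2, h3, h4, h5, h6, h7, h8, h9, h10⟩ := hne
    set S : Finset V := {u, v, x, y, z} with hS
    have hScard : S.card = 5 := by
      rw [hS]
      rw [Finset.card_insert_of_notMem (by simp [h1, h2, h3, h4]),
        Finset.card_insert_of_notMem (by simp [h5, h6, h7]),
        Finset.card_insert_of_notMem (by simp [h8, h9]),
        Finset.card_insert_of_notMem (by simp [h10]), Finset.card_singleton]
    have hcount : ∀ D : Finset V, w D ≠ 0 → 2 ≤ (S.filter (· ∈ D)).card := by
      intro D hD
      have hdom := hwdom D hD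
      obtain ⟨a, haD, ha⟩ := hdom x
      obtain ⟨b, hbD, hb⟩ := hdom y
      obtain ⟨c, hcD, hc⟩ := hdom z
      have ha' : a = x ∨ a = u ∨ a = y := by
        rcases ha with rfl | ha
        · left; rfl
        · right; exact adj_eq_of_degree_two G x u y a hdx h3 hux hxy.symm ha
      have hb' : b = y ∨ b = x ∨ b = v := by
        rcases hb with rfl | hb
        · left; rfl
        · right; exact adj_eq_of_degree_two G y x v b hdy h5.symm hxy hyv.symm hb
      have hc' : c = z ∨ c = u ∨ c = v := by
        rcases hc with rfl | hc
        · left; rfl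
        · right; exact adj_eq_of_degree_two G z u v c hdz h1 huz hzv.symm hc
      have haS : a ∈ S.filter (· ∈ D) := by
        rw [Finset.mem_filter]
        refine ⟨?_, haD⟩
        rw [hS]
        rcases ha' with rfl | rfl | rfl <;> simp
      have hbS : b ∈ S.filter (· ∈ D) := by
        rw [Finset.mem_filter]
        refine ⟨?_, hbD⟩
        rw [hS]
        rcases hb' with rfl | rfl | rfl <;> simp
      have hcS : c ∈ S.filter (· ∈ D) := by
        rw [Finset.mem_filter]
        refine ⟨?_, hcD⟩
        rw [hS]
        rcases hc' with rfl | rfl | rfl <;> simp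
      by_contra hlt
      push_neg at hlt
      have hle1 : (S.filter (· ∈ D)).card ≤ 1 := by omega
      have hab : a = b := Finset.card_le_one.mp hle1 a haS b hbS
      have hac : a = c := Finset.card_le_one.mp hle1 a haS c hcS
      have hb2 : a = y ∨ a = x ∨ a = v := by rw [hab]; exact hb'
      have hc2 : a = z ∨ a = u ∨ a = v := by rw [hac]; exact hc'
      rcases ha' with rfl | rfl | rfl
      · rcases hc2 with h' | h' | h'
        · exact h9 h'
        · exact h2 h'.symm
        · exact h5 h'.symm
      · rcases hb2 with h' | h' | h'
        · exact h3 h'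
        · exact h2 h'
        · exact h1 h'
      · rcases hc2 with h' | h' | h'
        · exact h10 h'
        · exact h3 h'.symm
        · exact h6 h'.symm
    have hswap : ∑ s ∈ S, ∑ D ∈ Finset.univ.filter (fun D : Finset V => s ∈ D), w D
        = ∑ D : Finset V, ((S.filter (· ∈ D)).card : ℝ) * w D := by
      simp_rw [Finset.sum_filter]
      rw [Finset.sum_comm]
      refine Finset.sum_congr rfl fun D _ => ?_
      rw [← Finset.sum_filter, Finset.sum_const, nsmul_eq_mul]
    have hsum : (2 : ℝ) ≤ ∑ s ∈ S, ∑ D ∈ Finset.univ.filter (fun D : Finset V => s ∈ D), w D := by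
      rw [hswap]
      have h2' : (2 : ℝ) = ∑ D : Finset V, 2 * w D := by rw [← Finset.mul_sum, hw1, mul_one]
      rw [h2']
      refine Finset.sum_le_sum fun D _ => ?_
      by_cases hD : w D = 0
      · simp [hD]
      · exact mul_le_mul_of_nonneg_right (by exact_mod_cast hcount D hD) (hw0 D)
    by_contra hcon
    push_neg at hcon
    have hlt : ∑ s ∈ S, ∑ D ∈ Finset.univ.filter (fun D : Finset V => s ∈ D), w D
        < ∑ s ∈ S, (2 / 5 : ℝ) :=
      Finset.sum_lt_sum_of_nonempty ⟨u, by simp [hS]⟩ fun s _ => hcon s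
    rw [Finset.sum_const, hScard] at hlt
    norm_num at hlt
    linarith
  refine ⟨?_, key⟩
  apply Real.sSup_le _ (by norm_num)
  rintro r ⟨p, hp0, hp1, rfl, w, hw0, hw1, hwdom, hwmarg⟩
  obtain ⟨v, hv⟩ := key w hw0 hw1 hwdom
  have hple : (2 / 5 : ℝ) ≤ p := le_trans hv (hwmarg v)
  have := one_div_le_one_div_of_le (show (0:ℝ) < 2 / 5 by norm_num) hple
  norm_num at this
  rw [one_div]
  linarith
end

section
/- Let G be a finite simple graph, f : V(G) → [0,1] a demand function, and r a real with 0 < r ≤ 1. If there exists a finitely supported probability distribution D over subsets of V(G) such that for every vertex v the probability that the closed neighbourhood N[v] meets D is at least f(v) and the probability that v ∈ D is at most r, then G admits an f-dominating r-colouring. -/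
open Finset
open scoped Classical

def IsFDomColouring {V : Type*} [Fintype V] [DecidableEq V]
    (G : SimpleGraph V) (f : V → ℝ) (r : ℝ) (w : Finset V → ℝ) : Prop :=
  (∀ D, 0 ≤ w D) ∧ (∑ D : Finset V, w D) = 1 ∧
    (∀ v : V, f v ≤ ∑ D ∈ Finset.univ.filter
        (fun D : Finset V => ∃ u ∈ D, u = v ∨ G.Adj u v), w D) ∧
    (∀ v : V, ∑ D ∈ Finset.univ.filter (fun D : Finset V => v ∈ D), w D = r)

namespace FDomAux

variable {V : Type*} [Fintype V] [DecidableEq V]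

lemma sum_filter_congr {p q : Finset V → Prop} [DecidablePred p] [DecidablePred q]
    (h : ∀ D, p D ↔ q D) (g : Finset V → ℝ) :
    ∑ D ∈ Finset.univ.filter p, g D = ∑ D ∈ Finset.univ.filter q, g D := by
  apply Finset.sum_congr _ (fun _ _ => rfl)
  ext D
  simp only [Finset.mem_filter, Finset.mem_univ, true_and]
  exact h D

lemma sum_bij_erase (v : V) (p : Finset V → Prop) [DecidablePred p] (g : Finset V → ℝ) :
    ∑ D ∈ Finset.univ.filter (fun D : Finset V => v ∈ D ∧ p D), g (D.erase v)
      = ∑ D ∈ Finset.univ.filter (fun D : Finset V => v ∉ D ∧ p (insert v D)), g D := by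
  apply Finset.sum_nbij' (fun D => D.erase v) (fun D => insert v D)
  · intro a ha
    simp only [Finset.mem_filter, Finset.mem_univ, true_and] at ha ⊢
    refine ⟨Finset.notMem_erase v a, ?_⟩
    rw [Finset.insert_erase ha.1]; exact ha.2
  · intro a ha
    simp only [Finset.mem_filter, Finset.mem_univ, true_and] at ha ⊢
    exact ⟨Finset.mem_insert_self v a, ha.2⟩
  · intro a ha
    simp only [Finset.mem_filter, Finset.mem_univ, true_and] at ha
    exact Finset.insert_erase ha.1
  · intro a ha
    simp only [Finset.mem_filter, Finset.mem_univ, true_and] at ha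
    exact Finset.erase_insert ha.1
  · intro a _; rfl

noncomputable def marg (w : Finset V → ℝ) (v : V) : ℝ :=
  ∑ D ∈ Finset.univ.filter (fun D : Finset V => v ∈ D), w D

noncomputable def domp (G : SimpleGraph V) (w : Finset V → ℝ) (v : V) : ℝ :=
  ∑ D ∈ Finset.univ.filter (fun D : Finset V => ∃ u ∈ D, u = v ∨ G.Adj u v), w D

lemma split_pred (v : V) (p : Finset V → Prop) [DecidablePred p] (g : Finset V → ℝ) :
    ∑ D ∈ Finset.univ.filter p, g D
      = ∑ D ∈ Finset.univ.filter (fun D : Finset V => v ∈ D ∧ p D), g D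
        + ∑ D ∈ Finset.univ.filter (fun D : Finset V => v ∉ D ∧ p D), g D := by
  rw [← Finset.sum_filter_add_sum_filter_not (Finset.univ.filter p)
      (fun D => v ∈ D) g, Finset.filter_filter, Finset.filter_filter]
  congr 1
  · exact sum_filter_congr (fun D => by tauto) g
  · exact sum_filter_congr (fun D => by tauto) g

lemma step (G : SimpleGraph V) (r : ℝ) (hr1 : r ≤ 1)
    (w : Finset V → ℝ) (hw0 : ∀ D, 0 ≤ w D) (hw1 : (∑ D : Finset V, w D) = 1)
    (v : V) (hv : marg w v < r) :
    ∃ w₂ : Finset V → ℝ, (∀ D, 0 ≤ w₂ D) ∧ (∑ D : Finset V, w₂ D) = 1 ∧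
      marg w₂ v = r ∧ (∀ u, u ≠ v → marg w₂ u = marg w u) ∧
      (∀ u, domp G w u ≤ domp G w₂ u) := by
  set m : ℝ := marg w v with hm
  have hm1 : m < 1 := lt_of_lt_of_le hv hr1
  have hm1' : (0:ℝ) < 1 - m := by linarith
  set t : ℝ := (r - m) / (1 - m) with ht
  have ht0 : 0 ≤ t := div_nonneg (by linarith) (le_of_lt hm1')
  have ht1 : t ≤ 1 := by
    rw [div_le_one hm1']; linarith
  set w₂ : Finset V → ℝ := fun D => if v ∈ D then w D + t * w (D.erase v) else (1 - t) * w D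
    with hw₂
  have split : ∀ (p : Finset V → Prop) [DecidablePred p],
      ∑ D ∈ Finset.univ.filter p, w₂ D
        = ∑ D ∈ Finset.univ.filter (fun D : Finset V => v ∈ D ∧ p D), w D
          + t * ∑ D ∈ Finset.univ.filter (fun D : Finset V => v ∉ D ∧ p (insert v D)), w D
          + (1 - t) * ∑ D ∈ Finset.univ.filter (fun D : Finset V => v ∉ D ∧ p D), w D := by
    intro p _
    rw [split_pred v p w₂]
    have h2 : ∑ D ∈ Finset.univ.filter (fun D : Finset V => v ∈ D ∧ p D), w₂ D
        = ∑ D ∈ Finset.univ.filter (fun D : Finset V => v ∈ D ∧ p D), w D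
          + t * ∑ D ∈ Finset.univ.filter (fun D : Finset V => v ∉ D ∧ p (insert v D)), w D := by
      have hc : ∀ D ∈ Finset.univ.filter (fun D : Finset V => v ∈ D ∧ p D),
          w₂ D = w D + t * w (D.erase v) := by
        intro D hD
        simp only [Finset.mem_filter, Finset.mem_univ, true_and] at hD
        simp [hw₂, hD.1]
      rw [Finset.sum_congr rfl hc, Finset.sum_add_distrib, ← Finset.mul_sum,
        sum_bij_erase v p w]
    have h3 : ∑ D ∈ Finset.univ.filter (fun D : Finset V => v ∉ D ∧ p D), w₂ D
        = (1 - t) * ∑ D ∈ Finset.univ.filter (fun D : Finset V => v ∉ D ∧ p D), w D := by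
      rw [Finset.mul_sum]
      apply Finset.sum_congr rfl
      intro D hD
      simp only [Finset.mem_filter, Finset.mem_univ, true_and] at hD
      simp [hw₂, hD.1]
    rw [h2, h3]
  have hA : ∑ D ∈ Finset.univ.filter (fun D : Finset V => v ∈ D ∧ True), w D = m := by
    rw [hm]; unfold marg
    exact sum_filter_congr (fun D => by tauto) w
  have hB : ∑ D ∈ Finset.univ.filter (fun D : Finset V => v ∉ D ∧ True), w D = 1 - m := by
    have hsp := split_pred v (fun _ : Finset V => True) w
    have huniv : ∑ D ∈ Finset.univ.filter (fun _ : Finset V => True), w D = 1 := by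
      rw [Finset.filter_true]; exact hw1
    rw [huniv, hA] at hsp
    linarith
  refine ⟨w₂, ?_, ?_, ?_, ?_, ?_⟩
  · intro D
    by_cases hD : v ∈ D <;> simp only [hw₂, hD, if_true, if_false]
    · exact add_nonneg (hw0 D) (mul_nonneg ht0 (hw0 _))
    · have := hw0 D; nlinarith
  · have h := split (fun _ => True)
    have huniv : ∑ D ∈ Finset.univ.filter (fun _ : Finset V => True), w₂ D
        = ∑ D : Finset V, w₂ D := by rw [Finset.filter_true]
    rw [huniv, hA, hB] at h
    rw [h]; ring
  · -- marg w₂ v = r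
    have h := split (fun D => v ∈ D)
    have e1 : ∑ D ∈ Finset.univ.filter (fun D : Finset V => v ∈ D ∧ v ∈ D), w D = m := by
      rw [← hA]; exact sum_filter_congr (fun D => by tauto) w
    have e2 : ∑ D ∈ Finset.univ.filter
        (fun D : Finset V => v ∉ D ∧ v ∈ insert v D), w D = 1 - m := by
      rw [← hB]
      exact sum_filter_congr (fun D => by simp) w
    have e3 : ∑ D ∈ Finset.univ.filter (fun D : Finset V => v ∉ D ∧ v ∈ D), w D = 0 := by
      apply Finset.sum_eq_zero; intro D hD
      simp only [Finset.mem_filter] at hD; tauto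
    rw [e1, e2, e3] at h
    unfold marg
    rw [h, ht]
    field_simp
    ring
  · -- other marginals unchanged
    intro u hu
    have h := split (fun D => u ∈ D)
    have e2 : ∑ D ∈ Finset.univ.filter
        (fun D : Finset V => v ∉ D ∧ u ∈ insert v D), w D
        = ∑ D ∈ Finset.univ.filter (fun D : Finset V => v ∉ D ∧ u ∈ D), w D := by
      refine sum_filter_congr (fun D => ?_) w
      simp only [Finset.mem_insert]
      constructor
      · rintro ⟨h1, h2 | h2⟩
        · exact absurd h2 hu
        · exact ⟨h1, h2⟩
      · rintro ⟨h1, h2⟩; exact ⟨h1, Or.inr h2⟩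
    rw [e2] at h
    have hsp := split_pred v (fun D : Finset V => u ∈ D) w
    unfold marg
    rw [h, hsp]; ring
  · -- domination only goes up
    intro u
    have h := split (fun D => ∃ x ∈ D, x = u ∨ G.Adj x u)
    have hsub : Finset.univ.filter
          (fun D : Finset V => v ∉ D ∧ ∃ x ∈ D, x = u ∨ G.Adj x u)
        ⊆ Finset.univ.filter
          (fun D : Finset V => v ∉ D ∧ ∃ x ∈ insert v D, x = u ∨ G.Adj x u) := by
      intro D hD
      simp only [Finset.mem_filter, Finset.mem_univ, true_and] at hD ⊢
      obtain ⟨h1, x, hx, h2⟩ := hD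
      exact ⟨h1, x, Finset.mem_insert_of_mem hx, h2⟩
    have hkey : ∑ D ∈ Finset.univ.filter
          (fun D : Finset V => v ∉ D ∧ ∃ x ∈ D, x = u ∨ G.Adj x u), w D
        ≤ ∑ D ∈ Finset.univ.filter
          (fun D : Finset V => v ∉ D ∧ ∃ x ∈ insert v D, x = u ∨ G.Adj x u), w D :=
      Finset.sum_le_sum_of_subset_of_nonneg hsub (fun D _ _ => hw0 D)
    have hsp := split_pred v (fun D : Finset V => ∃ x ∈ D, x = u ∨ G.Adj x u) w
    unfold domp
    rw [h, hsp]
    nlinarith [hkey]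

lemma main_aux (G : SimpleGraph V) (f : V → ℝ) (r : ℝ) (hr1 : r ≤ 1) :
    ∀ n : ℕ, ∀ w : Finset V → ℝ,
      (Finset.univ.filter (fun v : V => marg w v ≠ r)).card ≤ n →
      (∀ D, 0 ≤ w D) → (∑ D : Finset V, w D) = 1 →
      (∀ v, f v ≤ domp G w v) → (∀ v, marg w v ≤ r) →
      ∃ w' : Finset V → ℝ, IsFDomColouring G f r w' := by
  intro n
  induction n with
  | zero =>
    intro w hcard hw0 hw1 hdom hmarg
    refine ⟨w, hw0, hw1, hdom, ?_⟩
    intro v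
    by_contra h
    have hv : v ∈ Finset.univ.filter (fun v : V => marg w v ≠ r) := by
      simp only [Finset.mem_filter, Finset.mem_univ, true_and]
      exact h
    have := Finset.card_pos.mpr ⟨v, hv⟩
    omega
  | succ n ih =>
    intro w hcard hw0 hw1 hdom hmarg
    by_cases hempty : (Finset.univ.filter (fun v : V => marg w v ≠ r)) = ∅
    · refine ⟨w, hw0, hw1, hdom, ?_⟩
      intro v
      by_contra h
      have hv : v ∈ Finset.univ.filter (fun v : V => marg w v ≠ r) := by
        simp only [Finset.mem_filter, Finset.mem_univ, true_and]
        exact h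
      rw [hempty] at hv
      exact absurd hv (Finset.notMem_empty v)
    · obtain ⟨v, hv⟩ := Finset.nonempty_of_ne_empty hempty
      have hv' := hv
      simp only [Finset.mem_filter, Finset.mem_univ, true_and] at hv'
      have hvlt : marg w v < r := lt_of_le_of_ne (hmarg v) hv'
      obtain ⟨w₂, h0, h1, h2, h3, h4⟩ := step G r hr1 w hw0 hw1 v hvlt
      apply ih w₂ _ h0 h1 (fun u => le_trans (hdom u) (h4 u)) _
      · have hsub : Finset.univ.filter (fun u : V => marg w₂ u ≠ r)
            ⊆ (Finset.univ.filter (fun u : V => marg w u ≠ r)).erase v := by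
          intro u hu
          simp only [Finset.mem_filter, Finset.mem_univ, true_and, Finset.mem_erase] at hu ⊢
          by_cases huv : u = v
          · subst huv; exact absurd h2 hu
          · rw [h3 u huv] at hu; exact ⟨huv, hu⟩
        calc (Finset.univ.filter (fun u : V => marg w₂ u ≠ r)).card
            ≤ ((Finset.univ.filter (fun u : V => marg w u ≠ r)).erase v).card :=
              Finset.card_le_card hsub
          _ = (Finset.univ.filter (fun u : V => marg w u ≠ r)).card - 1 :=
              Finset.card_erase_of_mem hv
          _ ≤ n := by
              have := Finset.card_pos.mpr ⟨v, hv⟩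
              omega
      · intro u
        by_cases huv : u = v
        · subst huv; rw [h2]
        · rw [h3 u huv]; exact hmarg u

end FDomAux

/-- If there is a finitely supported probability distribution over subsets of `V(G)` under
which every closed neighbourhood is met with probability at least the demand and every vertex
belongs to the random set with probability at most `r`, then `G` admits an `f`-dominating
`r`-colouring. -/
theorem exists_fdomColouring_of_le {V : Type*} [Fintype V] [DecidableEq V]
    (G : SimpleGraph V) (f : V → ℝ) (hf0 : ∀ v, 0 ≤ f v) (hf1 : ∀ v, f v ≤ 1)
    (r : ℝ) (hr0 : 0 < r) (hr1 : r ≤ 1)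
    (w : Finset V → ℝ) (hw0 : ∀ D, 0 ≤ w D) (hw1 : (∑ D : Finset V, w D) = 1)
    (hdom : ∀ v : V, f v ≤ ∑ D ∈ Finset.univ.filter
        (fun D : Finset V => ∃ u ∈ D, u = v ∨ G.Adj u v), w D)
    (hmarg : ∀ v : V, ∑ D ∈ Finset.univ.filter (fun D : Finset V => v ∈ D), w D ≤ r) :
    ∃ w' : Finset V → ℝ, IsFDomColouring G f r w' := by
  exact FDomAux.main_aux G f r hr1
    (Finset.univ.filter (fun v : V => FDomAux.marg w v ≠ r)).card w le_rfl hw0 hw1 hdom hmarg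
end

section
/- Let G be a finite simple graph and (G_0, G_1) a separation of G of order 1, i.e. subgraphs with G_0 ∪ G_1 = G and V(G_0) ∩ V(G_1) = {v} for a single vertex v. Let f_0, f_1 be demand functions on G_0 and G_1 respectively and let r be a real with 0 < r ≤ 1. If for each i ∈ {0,1} the graph G_i admits an f_i-dominating r-colouring, then G admits an f-dominating r-colouring, where f(v) = min{1, f_0(v) + f_1(v) − r} and f(w) = f_i(w) for every w ∈ V(G_i) \ {v}. -/
open Finset
open scoped Classical

namespace GlueAux

lemma ddc {c d : ℝ} (h0 : 0 ≤ c) (h1 : c ≤ d) : d / d * c = c := by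
  rcases eq_or_ne d 0 with h | h
  · have hc : c = 0 := le_antisymm (by simpa [h] using h1) h0
    simp [hc]
  · rw [div_self h, one_mul]

lemma cdd {c d : ℝ} (h0 : 0 ≤ c) (h1 : c ≤ d) : c / d * d = c := by
  rcases eq_or_ne d 0 with h | h
  · have hc : c = 0 := le_antisymm (by simpa [h] using h1) h0
    simp [hc]
  · field_simp

lemma div_le_one'' {c d : ℝ} (h0 : 0 ≤ c) (h1 : c ≤ d) : c / d ≤ 1 := by
  rcases eq_or_ne d 0 with h | h
  · have hc : c = 0 := le_antisymm (by simpa [h] using h1) h0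
    simp [hc, h]
  · rw [div_le_one (lt_of_le_of_ne (le_trans h0 h1) (Ne.symm h))]
    exact h1

lemma single_le_filter_sum {α : Type*} [Fintype α] (p : α → ℝ) (hp : ∀ x, 0 ≤ p x)
    (P : α → Prop) {x : α} (hx : P x) : p x ≤ ∑ z ∈ univ.filter P, p z :=
  Finset.single_le_sum (fun z _ => hp z) (by simp [hx])

lemma sum_split3 {α : Type*} [Fintype α] (P C : α → Prop) (g : α → ℝ) :
    ∑ x, g x = (∑ x ∈ univ.filter P, g x)
      + ((∑ x ∈ univ.filter (fun x => ¬ P x ∧ C x), g x)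
        + ∑ x ∈ univ.filter (fun x => ¬ P x ∧ ¬ C x), g x) := by
  rw [← Finset.sum_filter_add_sum_filter_not univ P g]
  congr 1
  rw [← Finset.sum_filter_add_sum_filter_not (univ.filter fun x => ¬ P x) C g,
    Finset.filter_filter, Finset.filter_filter]

lemma filter_weighted_sum {γ : Type*} (p g : γ → ℝ) (s : Finset γ) (cm c : ℝ)
    (hg : ∀ y ∈ s, g y = p y / cm * c)
    (hsum : ∑ y ∈ s, p y = cm) (h0 : 0 ≤ c) (h1 : c ≤ cm) :
    ∑ y ∈ s, g y = c := by
  have h : ∑ y ∈ s, g y = (∑ y ∈ s, p y) / cm * c := by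
    rw [Finset.sum_div, Finset.sum_mul]
    exact Finset.sum_congr rfl hg
  rw [h, hsum]
  exact ddc h0 h1

variable {α β : Type*} [Fintype α] [Fintype β]

noncomputable def aM (p : α → ℝ) (Pv A : α → Prop) : ℝ :=
  ∑ x ∈ univ.filter (fun x => ¬ Pv x ∧ A x), p x

noncomputable def sV (p : α → ℝ) (q : β → ℝ) (Pv A : α → Prop) (Qv B : β → Prop) (r : ℝ) : ℝ :=
  max 0 (aM p Pv A + aM q Qv B - (1 - r))

noncomputable def blk (p : α → ℝ) (Pv A : α → Prop) (r : ℝ) (x : α) : ℝ :=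
  if Pv x then r else if A x then aM p Pv A else (1 - r) - aM p Pv A

noncomputable def cf (p : α → ℝ) (q : β → ℝ) (Pv A : α → Prop) (Qv B : β → Prop) (r : ℝ)
    (x : α) (y : β) : ℝ :=
  if Pv x then (if Qv y then r else 0)
  else if Qv y then 0
  else if A x then (if B y then sV p q Pv A Qv B r else aM p Pv A - sV p q Pv A Qv B r)
  else if B y then aM q Qv B - sV p q Pv A Qv B r
  else (1 - r) - aM p Pv A - aM q Qv B + sV p q Pv A Qv B r

noncomputable def W (p : α → ℝ) (q : β → ℝ) (Pv A : α → Prop) (Qv B : β → Prop) (r : ℝ)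
    (x : α) (y : β) : ℝ :=
  p x / blk p Pv A r x * (q y / blk q Qv B r y * cf p q Pv A Qv B r x y)

variable (p : α → ℝ) (q : β → ℝ) (Pv A : α → Prop) (Qv B : β → Prop) (r : ℝ)

lemma aM_nonneg (hp : ∀ x, 0 ≤ p x) : 0 ≤ aM p Pv A :=
  Finset.sum_nonneg fun x _ => hp x

lemma notPv_sum (hpsum : ∑ x, p x = 1) (hpr : ∑ x ∈ univ.filter Pv, p x = r) :
    ∑ x ∈ univ.filter (fun x => ¬ Pv x), p x = 1 - r := by
  have := Finset.sum_filter_add_sum_filter_not univ Pv p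
  rw [hpsum, hpr] at this
  linarith

lemma notA_sum (hpsum : ∑ x, p x = 1) (hpr : ∑ x ∈ univ.filter Pv, p x = r) :
    ∑ x ∈ univ.filter (fun x => ¬ Pv x ∧ ¬ A x), p x = (1 - r) - aM p Pv A := by
  have h := Finset.sum_filter_add_sum_filter_not (univ.filter fun x => ¬ Pv x) A p
  rw [Finset.filter_filter, Finset.filter_filter, notPv_sum p Pv r hpsum hpr] at h
  have : aM p Pv A = ∑ x ∈ univ.filter (fun x => ¬ Pv x ∧ A x), p x := rfl
  linarith [h]

lemma aM_le (hp : ∀ x, 0 ≤ p x) (hpsum : ∑ x, p x = 1)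
    (hpr : ∑ x ∈ univ.filter Pv, p x = r) : aM p Pv A ≤ 1 - r := by
  have h := notA_sum p Pv A r hpsum hpr
  have h2 : 0 ≤ ∑ x ∈ univ.filter (fun x => ¬ Pv x ∧ ¬ A x), p x :=
    Finset.sum_nonneg fun x _ => hp x
  linarith

lemma p_le_blk (hp : ∀ x, 0 ≤ p x) (hpsum : ∑ x, p x = 1)
    (hpr : ∑ x ∈ univ.filter Pv, p x = r) (x : α) : p x ≤ blk p Pv A r x := by
  unfold blk
  by_cases h1 : Pv x
  · rw [if_pos h1, ← hpr]
    exact Finset.single_le_sum (fun z _ => hp z) (by simp [h1])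
  · rw [if_neg h1]
    by_cases h2 : A x
    · rw [if_pos h2]
      unfold aM
      exact Finset.single_le_sum (fun z _ => hp z) (by simp [h1, h2])
    · rw [if_neg h2, ← notA_sum p Pv A r hpsum hpr]
      exact Finset.single_le_sum (fun z _ => hp z) (by simp [h1, h2])

lemma blk_nonneg (hp : ∀ x, 0 ≤ p x) (hpsum : ∑ x, p x = 1)
    (hpr : ∑ x ∈ univ.filter Pv, p x = r) (hr0 : 0 ≤ r) (x : α) :
    0 ≤ blk p Pv A r x := by
  unfold blk
  split_ifs with h1 h2
  · exact hr0
  · exact aM_nonneg p Pv A hp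
  · have := aM_le p Pv A r hp hpsum hpr
    linarith


lemma sV_facts (hp : ∀ x, 0 ≤ p x) (hpsum : ∑ x, p x = 1)
    (hpr : ∑ x ∈ univ.filter Pv, p x = r)
    (hq : ∀ y, 0 ≤ q y) (hqsum : ∑ y, q y = 1)
    (hqr : ∑ y ∈ univ.filter Qv, q y = r) :
    0 ≤ sV p q Pv A Qv B r ∧ sV p q Pv A Qv B r ≤ aM p Pv A ∧
      sV p q Pv A Qv B r ≤ aM q Qv B ∧
      aM p Pv A + aM q Qv B - (1 - r) ≤ sV p q Pv A Qv B r := by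
  have ha0 : 0 ≤ aM p Pv A := aM_nonneg p Pv A hp
  have ha1 : aM p Pv A ≤ 1 - r := aM_le p Pv A r hp hpsum hpr
  have hb0 : 0 ≤ aM q Qv B := aM_nonneg q Qv B hq
  have hb1 : aM q Qv B ≤ 1 - r := aM_le q Qv B r hq hqsum hqr
  refine ⟨le_max_left _ _, max_le ha0 (by linarith), max_le hb0 (by linarith),
    le_max_right _ _⟩

lemma rowSum (hp : ∀ x, 0 ≤ p x) (hpsum : ∑ x, p x = 1)
    (hpr : ∑ x ∈ univ.filter Pv, p x = r)
    (hq : ∀ y, 0 ≤ q y) (hqsum : ∑ y, q y = 1)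
    (hqr : ∑ y ∈ univ.filter Qv, q y = r) (hr0 : 0 ≤ r) (x : α) :
    ∑ y, q y / blk q Qv B r y * cf p q Pv A Qv B r x y = blk p Pv A r x := by
  obtain ⟨hs0, hsa, hsb, hsg⟩ := sV_facts p q Pv A Qv B r hp hpsum hpr hq hqsum hqr
  have ha0 : 0 ≤ aM p Pv A := aM_nonneg p Pv A hp
  have ha1 : aM p Pv A ≤ 1 - r := aM_le p Pv A r hp hpsum hpr
  have hb0 : 0 ≤ aM q Qv B := aM_nonneg q Qv B hq
  have hb1 : aM q Qv B ≤ 1 - r := aM_le q Qv B r hq hqsum hqr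
  rw [sum_split3 Qv B]
  have e1 : ∑ y ∈ univ.filter Qv, q y / blk q Qv B r y * cf p q Pv A Qv B r x y
      = (if Pv x then r else 0) := by
    apply filter_weighted_sum q _ _ r _
    · intro y hy
      simp only [Finset.mem_filter, Finset.mem_univ, true_and] at hy
      by_cases hx : Pv x <;> simp [cf, blk, hy, hx]
    · exact hqr
    · by_cases hx : Pv x <;> simp [hx, hr0]
    · by_cases hx : Pv x <;> simp [hx, hr0]
  have e2 : ∑ y ∈ univ.filter (fun y => ¬ Qv y ∧ B y),
        q y / blk q Qv B r y * cf p q Pv A Qv B r x y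
      = (if Pv x then 0 else if A x then sV p q Pv A Qv B r
          else aM q Qv B - sV p q Pv A Qv B r) := by
    apply filter_weighted_sum q _ _ (aM q Qv B) _
    · intro y hy
      simp only [Finset.mem_filter, Finset.mem_univ, true_and] at hy
      by_cases hx : Pv x
      · simp [cf, blk, hy.1, hy.2, hx]
      · by_cases hA : A x <;> simp [cf, blk, hy.1, hy.2, hx, hA]
    · rfl
    · by_cases hx : Pv x
      · simp [hx]
      · by_cases hA : A x <;> simp [hx, hA] <;> linarith
    · by_cases hx : Pv x
      · simp [hx, hb0]
      · by_cases hA : A x <;> simp [hx, hA] <;> linarith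
  have e3 : ∑ y ∈ univ.filter (fun y => ¬ Qv y ∧ ¬ B y),
        q y / blk q Qv B r y * cf p q Pv A Qv B r x y
      = (if Pv x then 0 else if A x then aM p Pv A - sV p q Pv A Qv B r
          else (1 - r) - aM p Pv A - aM q Qv B + sV p q Pv A Qv B r) := by
    apply filter_weighted_sum q _ _ ((1 - r) - aM q Qv B) _
    · intro y hy
      simp only [Finset.mem_filter, Finset.mem_univ, true_and] at hy
      by_cases hx : Pv x
      · simp [cf, blk, hy.1, hy.2, hx]
      · by_cases hA : A x <;> simp [cf, blk, hy.1, hy.2, hx, hA]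
    · exact notA_sum q Qv B r hqsum hqr
    · by_cases hx : Pv x
      · simp [hx]
      · by_cases hA : A x <;> simp [hx, hA] <;> linarith
    · by_cases hx : Pv x
      · simp [hx]; linarith
      · by_cases hA : A x <;> simp [hx, hA] <;> linarith
  rw [e1, e2, e3]
  unfold blk
  by_cases hx : Pv x
  · simp [hx]
  · by_cases hA : A x <;> simp [hx, hA] <;> ring

lemma Wmarg1 (hp : ∀ x, 0 ≤ p x) (hpsum : ∑ x, p x = 1)
    (hpr : ∑ x ∈ univ.filter Pv, p x = r)
    (hq : ∀ y, 0 ≤ q y) (hqsum : ∑ y, q y = 1)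
    (hqr : ∑ y ∈ univ.filter Qv, q y = r) (hr0 : 0 ≤ r) (x : α) :
    ∑ y, W p q Pv A Qv B r x y = p x := by
  unfold W
  rw [← Finset.mul_sum, rowSum p q Pv A Qv B r hp hpsum hpr hq hqsum hqr hr0 x]
  exact cdd (hp x) (p_le_blk p Pv A r hp hpsum hpr x)

lemma cf_nonneg (hp : ∀ x, 0 ≤ p x) (hpsum : ∑ x, p x = 1)
    (hpr : ∑ x ∈ univ.filter Pv, p x = r)
    (hq : ∀ y, 0 ≤ q y) (hqsum : ∑ y, q y = 1)
    (hqr : ∑ y ∈ univ.filter Qv, q y = r) (hr0 : 0 ≤ r) (x : α) (y : β) :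
    0 ≤ cf p q Pv A Qv B r x y := by
  obtain ⟨hs0, hsa, hsb, hsg⟩ := sV_facts p q Pv A Qv B r hp hpsum hpr hq hqsum hqr
  unfold cf
  split_ifs <;> linarith

lemma W_nonneg (hp : ∀ x, 0 ≤ p x) (hpsum : ∑ x, p x = 1)
    (hpr : ∑ x ∈ univ.filter Pv, p x = r)
    (hq : ∀ y, 0 ≤ q y) (hqsum : ∑ y, q y = 1)
    (hqr : ∑ y ∈ univ.filter Qv, q y = r) (hr0 : 0 ≤ r) (x : α) (y : β) :
    0 ≤ W p q Pv A Qv B r x y := by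
  refine mul_nonneg (div_nonneg (hp x) (blk_nonneg p Pv A r hp hpsum hpr hr0 x))
    (mul_nonneg (div_nonneg (hq y) (blk_nonneg q Qv B r hq hqsum hqr hr0 y))
      (cf_nonneg p q Pv A Qv B r hp hpsum hpr hq hqsum hqr hr0 x y))

lemma sV_symm : sV q p Qv B Pv A r = sV p q Pv A Qv B r := by
  unfold sV; rw [add_comm]

lemma cf_symm (x : α) (y : β) :
    cf q p Qv B Pv A r y x = cf p q Pv A Qv B r x y := by
  unfold cf
  rw [sV_symm]
  split_ifs <;> ring

lemma W_symm (x : α) (y : β) :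
    W q p Qv B Pv A r y x = W p q Pv A Qv B r x y := by
  unfold W
  rw [cf_symm]
  ring

lemma Wrow (C : α → Prop) (hp : ∀ x, 0 ≤ p x) (hpsum : ∑ x, p x = 1)
    (hpr : ∑ x ∈ univ.filter Pv, p x = r)
    (hq : ∀ y, 0 ≤ q y) (hqsum : ∑ y, q y = 1)
    (hqr : ∑ y ∈ univ.filter Qv, q y = r) (hr0 : 0 ≤ r) :
    ∑ x, ∑ y, (if C x then W p q Pv A Qv B r x y else 0)
      = ∑ x ∈ univ.filter C, p x := by
  have h : ∀ x, ∑ y, (if C x then W p q Pv A Qv B r x y else 0)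
      = if C x then p x else 0 := by
    intro x
    by_cases hx : C x
    · simp only [if_pos hx]
      exact Wmarg1 p q Pv A Qv B r hp hpsum hpr hq hqsum hqr hr0 x
    · simp [hx]
  calc ∑ x, ∑ y, (if C x then W p q Pv A Qv B r x y else 0)
      = ∑ x, (if C x then p x else 0) := Finset.sum_congr rfl fun x _ => h x
    _ = ∑ x ∈ univ.filter C, p x := (Finset.sum_filter _ _).symm

lemma Wcol (C : β → Prop) (hp : ∀ x, 0 ≤ p x) (hpsum : ∑ x, p x = 1)
    (hpr : ∑ x ∈ univ.filter Pv, p x = r)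
    (hq : ∀ y, 0 ≤ q y) (hqsum : ∑ y, q y = 1)
    (hqr : ∑ y ∈ univ.filter Qv, q y = r) (hr0 : 0 ≤ r) :
    ∑ x, ∑ y, (if C y then W p q Pv A Qv B r x y else 0)
      = ∑ y ∈ univ.filter C, q y := by
  rw [Finset.sum_comm]
  rw [← Wrow q p Qv B Pv A r C hq hqsum hqr hp hpsum hpr hr0]
  exact Finset.sum_congr rfl fun y _ => Finset.sum_congr rfl fun x _ => by
    rw [W_symm]

lemma Wmem (hp : ∀ x, 0 ≤ p x) (hpsum : ∑ x, p x = 1)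
    (hpr : ∑ x ∈ univ.filter Pv, p x = r)
    (hq : ∀ y, 0 ≤ q y) (hqsum : ∑ y, q y = 1)
    (hqr : ∑ y ∈ univ.filter Qv, q y = r) (hr0 : 0 ≤ r) :
    ∑ x, ∑ y, (if Pv x ∨ Qv y then W p q Pv A Qv B r x y else 0) = r := by
  have hz : ∀ x y, ¬ Pv x → Qv y → W p q Pv A Qv B r x y = 0 := by
    intro x y hx hy
    simp [W, cf, hx, hy]
  have h : ∀ x y, (if Pv x ∨ Qv y then W p q Pv A Qv B r x y else 0)
      = (if Pv x then W p q Pv A Qv B r x y else 0) := by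
    intro x y
    by_cases hx : Pv x
    · simp [hx]
    · by_cases hy : Qv y <;> simp [hx, hy, hz x y hx]
  rw [Finset.sum_congr rfl fun x _ => Finset.sum_congr rfl fun y _ => h x y,
    Wrow p q Pv A Qv B r Pv hp hpsum hpr hq hqsum hqr hr0, hpr]

lemma Wdom (hp : ∀ x, 0 ≤ p x) (hpsum : ∑ x, p x = 1)
    (hpr : ∑ x ∈ univ.filter Pv, p x = r)
    (hq : ∀ y, 0 ≤ q y) (hqsum : ∑ y, q y = 1)
    (hqr : ∑ y ∈ univ.filter Qv, q y = r) (hr0 : 0 ≤ r)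
    (hPA : ∀ x, Pv x → A x) (hQB : ∀ y, Qv y → B y) :
    ∑ x, ∑ y, (if A x ∨ B y then W p q Pv A Qv B r x y else 0)
      = r + min (aM p Pv A + aM q Qv B) (1 - r) := by
  obtain ⟨hs0, hsa, hsb, hsg⟩ := sV_facts p q Pv A Qv B r hp hpsum hpr hq hqsum hqr
  have ha0 : 0 ≤ aM p Pv A := aM_nonneg p Pv A hp
  have ha1 : aM p Pv A ≤ 1 - r := aM_le p Pv A r hp hpsum hpr
  have hb0 : 0 ≤ aM q Qv B := aM_nonneg q Qv B hq
  have hb1 : aM q Qv B ≤ 1 - r := aM_le q Qv B r hq hqsum hqr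
  rw [sum_split3 Pv A]
  have e1 : ∑ x ∈ univ.filter Pv, ∑ y, (if A x ∨ B y then W p q Pv A Qv B r x y else 0)
      = r := by
    have hcong : ∀ x ∈ univ.filter Pv,
        (∑ y, (if A x ∨ B y then W p q Pv A Qv B r x y else 0)) = p x := by
      intro x hx
      simp only [mem_filter] at hx
      have hA : A x := hPA x hx.2
      calc ∑ y, (if A x ∨ B y then W p q Pv A Qv B r x y else 0)
          = ∑ y, W p q Pv A Qv B r x y :=
            Finset.sum_congr rfl fun y _ => if_pos (Or.inl hA)
        _ = p x := Wmarg1 p q Pv A Qv B r hp hpsum hpr hq hqsum hqr hr0 x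
    rw [Finset.sum_congr rfl hcong, hpr]
  have e2 : ∑ x ∈ univ.filter (fun x => ¬ Pv x ∧ A x),
        ∑ y, (if A x ∨ B y then W p q Pv A Qv B r x y else 0) = aM p Pv A := by
    apply Finset.sum_congr rfl
    intro x hx
    simp only [mem_filter] at hx
    calc ∑ y, (if A x ∨ B y then W p q Pv A Qv B r x y else 0)
        = ∑ y, W p q Pv A Qv B r x y :=
          Finset.sum_congr rfl fun y _ => if_pos (Or.inl hx.2.2)
      _ = p x := Wmarg1 p q Pv A Qv B r hp hpsum hpr hq hqsum hqr hr0 x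
  have e3 : ∑ x ∈ univ.filter (fun x => ¬ Pv x ∧ ¬ A x),
        ∑ y, (if A x ∨ B y then W p q Pv A Qv B r x y else 0)
      = aM q Qv B - sV p q Pv A Qv B r := by
    apply filter_weighted_sum p _ _ ((1 - r) - aM p Pv A) _
    · intro x hx
      simp only [Finset.mem_filter, Finset.mem_univ, true_and] at hx
      have h1 : ∀ y, (if A x ∨ B y then W p q Pv A Qv B r x y else 0)
          = (if B y then W p q Pv A Qv B r x y else 0) := by
        intro y
        by_cases hB : B y <;> simp [hx.2, hB]
      rw [Finset.sum_congr rfl fun y _ => h1 y, sum_split3 Qv B]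
      have g1 : ∑ y ∈ univ.filter Qv, (if B y then W p q Pv A Qv B r x y else 0) = 0 := by
        apply Finset.sum_eq_zero
        intro y hy
        simp only [mem_filter] at hy
        have : W p q Pv A Qv B r x y = 0 := by simp [W, cf, hx.1, hy.2]
        simp [this]
      have g2 : ∑ y ∈ univ.filter (fun y => ¬ Qv y ∧ B y),
          (if B y then W p q Pv A Qv B r x y else 0)
          = p x / ((1 - r) - aM p Pv A) * (aM q Qv B - sV p q Pv A Qv B r) := by
        apply filter_weighted_sum q _ _ (aM q Qv B) _
        · intro y hy
          simp only [Finset.mem_filter, Finset.mem_univ, true_and] at hy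
          rw [if_pos hy.2]
          simp only [W, cf, blk, hx.1, hx.2, hy.1, hy.2, if_neg, if_pos, if_false,
            if_true]
          ring
        · rfl
        · exact mul_nonneg (div_nonneg (hp x) (by linarith)) (by linarith)
        · calc p x / ((1 - r) - aM p Pv A) * (aM q Qv B - sV p q Pv A Qv B r)
              ≤ 1 * (aM q Qv B - sV p q Pv A Qv B r) := by
                apply mul_le_mul_of_nonneg_right _ (by linarith)
                exact div_le_one'' (hp x)
                  (by rw [← notA_sum p Pv A r hpsum hpr]
                      exact Finset.single_le_sum (fun z _ => hp z) (by simp [hx.1, hx.2]))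
            _ ≤ aM q Qv B := by linarith
      have g3 : ∑ y ∈ univ.filter (fun y => ¬ Qv y ∧ ¬ B y),
          (if B y then W p q Pv A Qv B r x y else 0) = 0 := by
        apply Finset.sum_eq_zero
        intro y hy
        simp only [mem_filter] at hy
        simp [hy.2.2]
      rw [g1, g2, g3]
      ring
    · exact notA_sum p Pv A r hpsum hpr
    · linarith
    · linarith
  rw [e1, e2, e3]
  rcases le_total (aM p Pv A + aM q Qv B) (1 - r) with h | h
  · have hv : sV p q Pv A Qv B r = 0 := max_eq_left (by linarith)
    rw [hv, min_eq_left h]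
    ring
  · have hv : sV p q Pv A Qv B r = aM p Pv A + aM q Qv B - (1 - r) :=
      max_eq_right (by linarith)
    rw [hv, min_eq_right h]
    ring


lemma sum_filter_congr {γ : Type*} {P Q : γ → Prop} (iP : DecidablePred P)
    (iQ : DecidablePred Q) (h : ∀ a, P a ↔ Q a) (s : Finset γ) (f : γ → ℝ) :
    ∑ a ∈ @Finset.filter _ P iP s, f a = ∑ a ∈ @Finset.filter _ Q iQ s, f a := by
  apply Finset.sum_congr _ (fun _ _ => rfl)
  ext a
  simp [Finset.mem_filter, h a]

lemma ite_le_ite {c d : Prop} (ic : Decidable c) (id : Decidable d) {x : ℝ}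
    (h : c → d) (hx : 0 ≤ x) :
    (@ite _ c ic x 0) ≤ (@ite _ d id x 0) := by
  split_ifs with h1 h2
  · exact le_rfl
  · exact absurd (h h1) h2
  · exact hx
  · exact le_rfl

lemma ite_congr'' {c d : Prop} (ic : Decidable c) (id : Decidable d) {x y : ℝ}
    (h : c ↔ d) : (@ite _ c ic x y) = (@ite _ d id x y) := by
  rcases Decidable.em c with h1 | h1
  · rw [if_pos h1, if_pos (h.mp h1)]
  · rw [if_neg h1, if_neg (fun hd => h1 (h.mpr hd))]

lemma domSum (hPA : ∀ x, Pv x → A x)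
    (hpr : ∑ x ∈ univ.filter Pv, p x = r) :
    ∑ x ∈ univ.filter A, p x = r + aM p Pv A := by
  rw [← Finset.sum_filter_add_sum_filter_not (univ.filter A) Pv p,
    Finset.filter_filter, Finset.filter_filter]
  congr 1
  · rw [← hpr]
    apply Finset.sum_congr _ (fun _ _ => rfl)
    ext a
    simp only [Finset.mem_filter, Finset.mem_univ, true_and]
    exact ⟨fun h => h.2, fun h => ⟨hPA a h, h⟩⟩
  · unfold aM
    apply Finset.sum_congr _ (fun _ _ => rfl)
    ext a
    simp only [Finset.mem_filter, Finset.mem_univ, true_and]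
    tauto

end GlueAux

open GlueAux

/-- Gluing two partially dominating fractional colourings along a cut-vertex
(a separation of order 1). -/
theorem glue_along_cutvertex {V : Type*} [Fintype V] [DecidableEq V] (G : SimpleGraph V)
    (G₀ G₁ : G.Subgraph) (hunion : G₀ ⊔ G₁ = ⊤) (v : V)
    (hsep : G₀.verts ∩ G₁.verts = {v})
    (f₀ f₁ : V → ℝ)
    (hf₀ : ∀ x ∈ G₀.verts, 0 ≤ f₀ x ∧ f₀ x ≤ 1)
    (hf₁ : ∀ x ∈ G₁.verts, 0 ≤ f₁ x ∧ f₁ x ≤ 1)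
    (r : ℝ) (hr0 : 0 < r) (hr1 : r ≤ 1)
    (h₀ : ∃ w : Finset ↥G₀.verts → ℝ, IsFDomColouring G₀.coe (fun x => f₀ x.1) r w)
    (h₁ : ∃ w : Finset ↥G₁.verts → ℝ, IsFDomColouring G₁.coe (fun x => f₁ x.1) r w) :
    ∃ w : Finset V → ℝ,
      IsFDomColouring G
        (fun x => if x = v then min 1 (f₀ v + f₁ v - r)
          else if x ∈ G₀.verts then f₀ x else f₁ x) r w := by
  obtain ⟨w₀, hw₀0, hw₀sum, hw₀dom, hw₀mem⟩ := h₀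
  obtain ⟨w₁, hw₁0, hw₁sum, hw₁dom, hw₁mem⟩ := h₁
  have hv' : v ∈ G₀.verts ∩ G₁.verts := by rw [hsep]; rfl
  have hv₀ : v ∈ G₀.verts := hv'.1
  have hv₁ : v ∈ G₁.verts := hv'.2
  have heqv : ∀ u, u ∈ G₀.verts → u ∈ G₁.verts → u = v := by
    intro u h0 h1
    have h : u ∈ G₀.verts ∩ G₁.verts := ⟨h0, h1⟩
    rwa [hsep] at h
  have huniv : ∀ u : V, u ∈ G₀.verts ∨ u ∈ G₁.verts := by
    intro u
    have h : u ∈ (G₀ ⊔ G₁).verts := by rw [hunion]; exact trivial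
    simpa [SimpleGraph.Subgraph.verts_sup] using h
  have hadj0 : ∀ (a b : ↥G₀.verts), G₀.coe.Adj a b → G.Adj ↑a ↑b := by
    intro a b h
    have h2 : G₀.Adj ↑a ↑b := by rwa [SimpleGraph.Subgraph.coe_adj] at h
    exact h2.adj_sub
  have hadj1 : ∀ (a b : ↥G₁.verts), G₁.coe.Adj a b → G.Adj ↑a ↑b := by
    intro a b h
    have h2 : G₁.Adj ↑a ↑b := by rwa [SimpleGraph.Subgraph.coe_adj] at h
    exact h2.adj_sub
  have himg0 : ∀ (z : V) (hz : z ∈ G₀.verts) (x : Finset ↥G₀.verts),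
      z ∈ x.image Subtype.val ↔ (⟨z, hz⟩ : ↥G₀.verts) ∈ x := by
    intro z hz x
    simp only [Finset.mem_image]
    constructor
    · rintro ⟨a, ha, he⟩
      have hae : a = ⟨z, hz⟩ := Subtype.ext he
      exact hae ▸ ha
    · intro h
      exact ⟨⟨z, hz⟩, h, rfl⟩
  have himg1 : ∀ (z : V) (hz : z ∈ G₁.verts) (y : Finset ↥G₁.verts),
      z ∈ y.image Subtype.val ↔ (⟨z, hz⟩ : ↥G₁.verts) ∈ y := by
    intro z hz y
    simp only [Finset.mem_image]
    constructor
    · rintro ⟨a, ha, he⟩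
      have hae : a = ⟨z, hz⟩ := Subtype.ext he
      exact hae ▸ ha
    · intro h
      exact ⟨⟨z, hz⟩, h, rfl⟩
  have hnimg0 : ∀ (z : V), z ∉ G₀.verts → ∀ (x : Finset ↥G₀.verts),
      z ∉ x.image Subtype.val := by
    intro z hz x h
    rw [Finset.mem_image] at h
    obtain ⟨a, _, he⟩ := h
    exact hz (he ▸ a.2)
  have hnimg1 : ∀ (z : V), z ∉ G₁.verts → ∀ (y : Finset ↥G₁.verts),
      z ∉ y.image Subtype.val := by
    intro z hz y h
    rw [Finset.mem_image] at h
    obtain ⟨a, _, he⟩ := h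
    exact hz (he ▸ a.2)
  set Pv : Finset ↥G₀.verts → Prop := fun x => (⟨v, hv₀⟩ : ↥G₀.verts) ∈ x with hPv
  set A : Finset ↥G₀.verts → Prop :=
    fun x => ∃ u ∈ x, u = (⟨v, hv₀⟩ : ↥G₀.verts) ∨ G₀.coe.Adj u ⟨v, hv₀⟩ with hA
  set Qv : Finset ↥G₁.verts → Prop := fun y => (⟨v, hv₁⟩ : ↥G₁.verts) ∈ y with hQv
  set B : Finset ↥G₁.verts → Prop :=
    fun y => ∃ u ∈ y, u = (⟨v, hv₁⟩ : ↥G₁.verts) ∨ G₁.coe.Adj u ⟨v, hv₁⟩ with hB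
  have hPA : ∀ x, Pv x → A x := fun x hx => ⟨⟨v, hv₀⟩, hx, Or.inl rfl⟩
  have hQB : ∀ y, Qv y → B y := fun y hy => ⟨⟨v, hv₁⟩, hy, Or.inl rfl⟩
  have hpr : ∑ x ∈ @Finset.filter _ Pv (fun a => Classical.propDecidable (Pv a))
      Finset.univ, w₀ x = r :=
    (sum_filter_congr _ _ (fun a => Iff.rfl) _ _).trans (hw₀mem ⟨v, hv₀⟩)
  have hqr : ∑ y ∈ @Finset.filter _ Qv (fun a => Classical.propDecidable (Qv a))
      Finset.univ, w₁ y = r :=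
    (sum_filter_congr _ _ (fun a => Iff.rfl) _ _).trans (hw₁mem ⟨v, hv₁⟩)
  have hr0' : (0 : ℝ) ≤ r := hr0.le
  set Wf : Finset ↥G₀.verts → Finset ↥G₁.verts → ℝ := GlueAux.W w₀ w₁ Pv A Qv B r with hWf
  have hWnn : ∀ x y, 0 ≤ Wf x y :=
    fun x y => GlueAux.W_nonneg w₀ w₁ Pv A Qv B r hw₀0 hw₀sum hpr hw₁0 hw₁sum hqr hr0' x y
  set U : Finset ↥G₀.verts → Finset ↥G₁.verts → Finset V :=
    fun x y => x.image Subtype.val ∪ y.image Subtype.val with hU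
  refine ⟨fun D => ∑ x, ∑ y, (if U x y = D then Wf x y else 0), ?_, ?_, ?_, ?_⟩
  · -- nonnegativity
    intro D
    refine Finset.sum_nonneg fun x _ => Finset.sum_nonneg fun y _ => ?_
    split_ifs with h
    · exact hWnn x y
    · exact le_rfl
  · -- sums to one
    calc ∑ D : Finset V, ∑ x, ∑ y, (if U x y = D then Wf x y else 0)
        = ∑ x, ∑ y, Wf x y := by
          rw [Finset.sum_comm]
          refine Finset.sum_congr rfl fun x _ => ?_
          rw [Finset.sum_comm]
          refine Finset.sum_congr rfl fun y _ => ?_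
          simp [Finset.sum_ite_eq]
      _ = ∑ x, w₀ x := Finset.sum_congr rfl fun x _ =>
          GlueAux.Wmarg1 w₀ w₁ Pv A Qv B r hw₀0 hw₀sum hpr hw₁0 hw₁sum hqr hr0' x
      _ = 1 := hw₀sum
  · -- domination
    have key : ∀ (P : Finset V → Prop) (inst : DecidablePred P),
        ∑ D ∈ @Finset.filter _ P inst Finset.univ,
            (∑ x, ∑ y, (if U x y = D then Wf x y else 0))
          = ∑ x, ∑ y, (if P (U x y) then Wf x y else 0) := by
      intro P inst
      rw [Finset.sum_comm]
      refine Finset.sum_congr rfl fun x _ => ?_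
      rw [Finset.sum_comm]
      refine Finset.sum_congr rfl fun y _ => ?_
      rw [Finset.sum_ite_eq]
      simp [Finset.mem_filter]
    intro u
    rw [key _ _]
    beta_reduce
    by_cases hu : u = v
    · subst hu
      rw [if_pos rfl]
      have e0 : f₀ u ≤ r + aM w₀ Pv A := by
        refine le_trans (hw₀dom ⟨u, hv₀⟩) (le_of_eq ?_)
        exact ((sum_filter_congr _ _ (fun a => Iff.rfl) _ _).symm).trans
          (GlueAux.domSum w₀ Pv A r hPA hpr)
      have e1 : f₁ u ≤ r + aM w₁ Qv B := by
        refine le_trans (hw₁dom ⟨u, hv₁⟩) (le_of_eq ?_)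
        exact ((sum_filter_congr _ _ (fun a => Iff.rfl) _ _).symm).trans
          (GlueAux.domSum w₁ Qv B r hQB hqr)
      have hstep : min 1 (f₀ u + f₁ u - r) ≤ r + min (aM w₀ Pv A + aM w₁ Qv B) (1 - r) := by
        rcases le_total (aM w₀ Pv A + aM w₁ Qv B) (1 - r) with h | h
        · rw [min_eq_left h]
          calc min 1 (f₀ u + f₁ u - r) ≤ f₀ u + f₁ u - r := min_le_right _ _
            _ ≤ r + (aM w₀ Pv A + aM w₁ Qv B) := by linarith
        · rw [min_eq_right h]
          calc min 1 (f₀ u + f₁ u - r) ≤ 1 := min_le_left _ _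
            _ = r + (1 - r) := by ring
      refine le_trans hstep ?_
      rw [← GlueAux.Wdom w₀ w₁ Pv A Qv B r hw₀0 hw₀sum hpr hw₁0 hw₁sum hqr hr0' hPA hQB]
      refine Finset.sum_le_sum fun x _ => Finset.sum_le_sum fun y _ =>
        ite_le_ite _ _ ?_ (hWnn x y)
      rintro (⟨z, hz, hzz⟩ | ⟨z, hz, hzz⟩)
      · refine ⟨↑z, Finset.mem_union_left _ (Finset.mem_image_of_mem _ hz), ?_⟩
        rcases hzz with h | h
        · exact Or.inl (congrArg Subtype.val h)
        · exact Or.inr (hadj0 _ _ h)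
      · refine ⟨↑z, Finset.mem_union_right _ (Finset.mem_image_of_mem _ hz), ?_⟩
        rcases hzz with h | h
        · exact Or.inl (congrArg Subtype.val h)
        · exact Or.inr (hadj1 _ _ h)
    · rw [if_neg hu]
      by_cases hu0 : u ∈ G₀.verts
      · rw [if_pos hu0]
        refine le_trans (le_trans (hw₀dom ⟨u, hu0⟩) (le_of_eq
          ((sum_filter_congr _ _ (fun a => Iff.rfl) _ _).trans
            (GlueAux.Wrow w₀ w₁ Pv A Qv B r
              (fun x => ∃ z ∈ x, z = (⟨u, hu0⟩ : ↥G₀.verts) ∨ G₀.coe.Adj z ⟨u, hu0⟩)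
              hw₀0 hw₀sum hpr hw₁0 hw₁sum hqr hr0').symm))) ?_
        refine Finset.sum_le_sum fun x _ => Finset.sum_le_sum fun y _ =>
          ite_le_ite _ _ ?_ (hWnn x y)
        rintro ⟨z, hz, hzz⟩
        refine ⟨↑z, Finset.mem_union_left _ (Finset.mem_image_of_mem _ hz), ?_⟩
        rcases hzz with h | h
        · exact Or.inl (congrArg Subtype.val h)
        · exact Or.inr (hadj0 _ _ h)
      · rw [if_neg hu0]
        have hu1 : u ∈ G₁.verts := (huniv u).resolve_left hu0
        refine le_trans (le_trans (hw₁dom ⟨u, hu1⟩) (le_of_eq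
          ((sum_filter_congr _ _ (fun a => Iff.rfl) _ _).trans
            (GlueAux.Wcol w₀ w₁ Pv A Qv B r
              (fun y => ∃ z ∈ y, z = (⟨u, hu1⟩ : ↥G₁.verts) ∨ G₁.coe.Adj z ⟨u, hu1⟩)
              hw₀0 hw₀sum hpr hw₁0 hw₁sum hqr hr0').symm))) ?_
        refine Finset.sum_le_sum fun x _ => Finset.sum_le_sum fun y _ =>
          ite_le_ite _ _ ?_ (hWnn x y)
        rintro ⟨z, hz, hzz⟩
        refine ⟨↑z, Finset.mem_union_right _ (Finset.mem_image_of_mem _ hz), ?_⟩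
        rcases hzz with h | h
        · exact Or.inl (congrArg Subtype.val h)
        · exact Or.inr (hadj1 _ _ h)
  · -- membership probability
    have key : ∀ (P : Finset V → Prop) (inst : DecidablePred P),
        ∑ D ∈ @Finset.filter _ P inst Finset.univ,
            (∑ x, ∑ y, (if U x y = D then Wf x y else 0))
          = ∑ x, ∑ y, (if P (U x y) then Wf x y else 0) := by
      intro P inst
      rw [Finset.sum_comm]
      refine Finset.sum_congr rfl fun x _ => ?_
      rw [Finset.sum_comm]
      refine Finset.sum_congr rfl fun y _ => ?_
      rw [Finset.sum_ite_eq]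
      simp [Finset.mem_filter]
    intro u
    rw [key _ _]
    by_cases hu0 : u ∈ G₀.verts
    · by_cases hu1 : u ∈ G₁.verts
      · -- u = v
        have huv : u = v := heqv u hu0 hu1
        subst huv
        refine Eq.trans (Finset.sum_congr rfl fun x _ => Finset.sum_congr rfl fun y _ =>
          ite_congr'' _ _ ?_)
          (GlueAux.Wmem w₀ w₁ Pv A Qv B r hw₀0 hw₀sum hpr hw₁0 hw₁sum hqr hr0')
        rw [hU]
        simp only [Finset.mem_union]
        constructor
        · rintro (h | h)
          · exact Or.inl ((himg0 u hu0 x).mp h)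
          · exact Or.inr ((himg1 u hu1 y).mp h)
        · rintro (h | h)
          · exact Or.inl ((himg0 u hu0 x).mpr h)
          · exact Or.inr ((himg1 u hu1 y).mpr h)
      · refine Eq.trans (Finset.sum_congr rfl fun x _ => Finset.sum_congr rfl fun y _ =>
          ite_congr'' _ _ ?_)
          (((GlueAux.Wrow w₀ w₁ Pv A Qv B r (fun x => (⟨u, hu0⟩ : ↥G₀.verts) ∈ x)
              hw₀0 hw₀sum hpr hw₁0 hw₁sum hqr hr0')).trans
            ((sum_filter_congr _ _ (fun a => Iff.rfl) _ _).trans (hw₀mem ⟨u, hu0⟩)))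
        rw [hU]
        simp only [Finset.mem_union]
        constructor
        · rintro (h | h)
          · exact (himg0 u hu0 x).mp h
          · exact absurd h (hnimg1 u hu1 y)
        · intro h
          exact Or.inl ((himg0 u hu0 x).mpr h)
    · have hu1 : u ∈ G₁.verts := (huniv u).resolve_left hu0
      refine Eq.trans (Finset.sum_congr rfl fun x _ => Finset.sum_congr rfl fun y _ =>
        ite_congr'' _ _ ?_)
        (((GlueAux.Wcol w₀ w₁ Pv A Qv B r (fun y => (⟨u, hu1⟩ : ↥G₁.verts) ∈ y)
            hw₀0 hw₀sum hpr hw₁0 hw₁sum hqr hr0')).trans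
          ((sum_filter_congr _ _ (fun a => Iff.rfl) _ _).trans (hw₁mem ⟨u, hu1⟩)))
      rw [hU]
      simp only [Finset.mem_union]
      constructor
      · rintro (h | h)
        · exact absurd h (hnimg0 u hu0 x)
        · exact (himg1 u hu1 y).mp h
      · intro h
        exact Or.inr ((himg1 u hu1 y).mpr h)
end

section
/- Let G be a finite simple graph and (G', H) a separation of G of order 2, i.e. subgraphs with G' ∪ H = G and V(G') ∩ V(H) = {u, v} for two distinct vertices u, v. Let f' and h be demand functions on G' and H respectively, and let r be a real with 0 < r < 1/2. Suppose G' admits an f'-dominating r-colouring, and H admits two h-dominating r-colourings D_0 and D_1 such that P(u ∈ D_0 and v ∈ D_0) = 0 and the events {u ∈ D_1} and {v ∈ D_1} coincide (i.e. with probability 1, u ∈ D_1 if and only if v ∈ D_1). Then G admits an f-dominating r-colouring, where f(w) = f'(w) for w ∈ V(G') and f(w) = h(w) for w ∈ V(H) \ {u, v}. -/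
open Finset
open scoped Classical

def trc {X : Type*} [DecidableEq X] (A B : X) (D : Finset X) : Bool × Bool :=
  (decide (A ∈ D), decide (B ∈ D))

lemma sum_bool_prod (F : Bool × Bool → ℝ) :
    ∑ t : Bool × Bool, F t
      = F (true, true) + F (true, false) + F (false, true) + F (false, false) := by
  simp [Fintype.sum_prod_type]; ring

lemma sum_fib_tot {X : Type*} [Fintype X] [DecidableEq X] (A B : X) (q : Finset X → ℝ) :
    (∑ D : Finset X, q D)
      = (∑ D ∈ univ.filter (fun D => trc A B D = (true, true)), q D)
        + (∑ D ∈ univ.filter (fun D => trc A B D = (true, false)), q D)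
        + (∑ D ∈ univ.filter (fun D => trc A B D = (false, true)), q D)
        + (∑ D ∈ univ.filter (fun D => trc A B D = (false, false)), q D) := by
  rw [← Finset.sum_fiberwise univ (fun D => trc A B D) q, sum_bool_prod]

lemma sum_fib_u {X : Type*} [Fintype X] [DecidableEq X] (A B : X) (q : Finset X → ℝ) :
    (∑ D ∈ univ.filter (fun D => A ∈ D), q D)
      = (∑ D ∈ univ.filter (fun D => trc A B D = (true, true)), q D)
        + (∑ D ∈ univ.filter (fun D => trc A B D = (true, false)), q D) := by
  rw [sum_filter, sum_filter, sum_filter, ← sum_add_distrib]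
  refine sum_congr rfl fun D _ => ?_
  by_cases hA : A ∈ D <;> by_cases hB : B ∈ D <;> simp [trc, hA, hB]

lemma sum_fib_v {X : Type*} [Fintype X] [DecidableEq X] (A B : X) (q : Finset X → ℝ) :
    (∑ D ∈ univ.filter (fun D => B ∈ D), q D)
      = (∑ D ∈ univ.filter (fun D => trc A B D = (true, true)), q D)
        + (∑ D ∈ univ.filter (fun D => trc A B D = (false, true)), q D) := by
  rw [sum_filter, sum_filter, sum_filter, ← sum_add_distrib]
  refine sum_congr rfl fun D _ => ?_
  by_cases hA : A ∈ D <;> by_cases hB : B ∈ D <;> simp [trc, hA, hB]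

lemma key_sum {X Y : Type*} [Fintype X] [DecidableEq X] [Fintype Y] [DecidableEq Y]
    (A B : X) (C E : Y) (q : Finset X → ℝ) (μ : Finset Y → ℝ) (p : Bool × Bool → ℝ)
    (S : Finset (Finset X)) (T : Finset (Finset Y)) :
    (∑ D ∈ S, ∑ F ∈ T, if trc A B D = trc C E F then q D * μ F / p (trc A B D) else 0)
      = ∑ t : Bool × Bool, (∑ D ∈ S.filter (fun D => trc A B D = t), q D)
          * ((∑ F ∈ T.filter (fun F => trc C E F = t), μ F) / p t) := by
  rw [← Finset.sum_fiberwise S (fun D => trc A B D)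
    (fun D => ∑ F ∈ T, if trc A B D = trc C E F then q D * μ F / p (trc A B D) else 0)]
  refine sum_congr rfl fun t _ => ?_
  have h1 : ∀ D ∈ S.filter (fun D => trc A B D = t),
      (∑ F ∈ T, if trc A B D = trc C E F then q D * μ F / p (trc A B D) else 0)
        = q D * ((∑ F ∈ T.filter (fun F => trc C E F = t), μ F) / p t) := by
    intro D hD
    rw [mem_filter] at hD
    simp only [hD.2]
    rw [sum_filter, sum_div, mul_sum]
    refine sum_congr rfl fun F _ => ?_
    by_cases hF : trc C E F = t
    · simp [hF, mul_div_assoc]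
    · simp [hF, Ne.symm hF]
  rw [sum_congr rfl h1, ← sum_mul]

set_option maxHeartbeats 2000000 in
/-- Gluing partially dominating fractional colourings along a separation of order 2:
if `G'` has an `f'`-dominating `r`-colouring and `H` has two `h`-dominating `r`-colourings,
one in which `u` and `v` never both belong to the random set, and one in which `u` belongs to
the random set if and only if `v` does, then `G` has an `f`-dominating `r`-colouring, where
`f = f'` on `V(G')` and `f = h` on `V(H) \ {u, v}`. -/
theorem glue_along_two_cut {V : Type*} [Fintype V] [DecidableEq V] (G : SimpleGraph V)
    (G' H : G.Subgraph) (hunion : G' ⊔ H = ⊤) (u v : V) (huv : u ≠ v)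
    (hsep : G'.verts ∩ H.verts = {u, v})
    (hu : u ∈ H.verts) (hv : v ∈ H.verts)
    (f' h : V → ℝ)
    (hf' : ∀ x ∈ G'.verts, 0 ≤ f' x ∧ f' x ≤ 1)
    (hh : ∀ x ∈ H.verts, 0 ≤ h x ∧ h x ≤ 1)
    (r : ℝ) (hr0 : 0 < r) (hr2 : r < 1 / 2)
    (hG' : ∃ w' : Finset ↥G'.verts → ℝ, IsFDomColouring G'.coe (fun x => f' x.1) r w')
    (w₀ w₁ : Finset ↥H.verts → ℝ)
    (hw₀ : IsFDomColouring H.coe (fun x => h x.1) r w₀)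
    (hw₁ : IsFDomColouring H.coe (fun x => h x.1) r w₁)
    (hdisj : ∀ D : Finset ↥H.verts, w₀ D ≠ 0 → ¬ ((⟨u, hu⟩ : ↥H.verts) ∈ D ∧ (⟨v, hv⟩ : ↥H.verts) ∈ D))
    (hsame : ∀ D : Finset ↥H.verts, w₁ D ≠ 0 → ((⟨u, hu⟩ : ↥H.verts) ∈ D ↔ (⟨v, hv⟩ : ↥H.verts) ∈ D)) :
    ∃ w : Finset V → ℝ,
      IsFDomColouring G (fun x => if x ∈ G'.verts then f' x else h x) r w := by
  obtain ⟨w', hw'0, hw'1, hw'dom, hw'mar⟩ := hG'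
  obtain ⟨hw₀0, hw₀1, hw₀dom, hw₀mar⟩ := hw₀
  obtain ⟨hw₁0, hw₁1, hw₁dom, hw₁mar⟩ := hw₁
  have huG : u ∈ G'.verts := by
    have : u ∈ G'.verts ∩ H.verts := by rw [hsep]; simp
    exact this.1
  have hvG : v ∈ G'.verts := by
    have : v ∈ G'.verts ∩ H.verts := by rw [hsep]; simp
    exact this.1
  have hVmem : ∀ x : V, x ∈ G'.verts ∪ H.verts := by
    intro x
    have hv2 := congrArg SimpleGraph.Subgraph.verts hunion
    rw [SimpleGraph.Subgraph.verts_sup, SimpleGraph.Subgraph.verts_top] at hv2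
    rw [hv2]; trivial
  set U₁ : ↥G'.verts := ⟨u, huG⟩ with hU₁
  set V₁ : ↥G'.verts := ⟨v, hvG⟩ with hV₁
  set U₂ : ↥H.verts := ⟨u, hu⟩ with hU₂
  set V₂ : ↥H.verts := ⟨v, hv⟩ with hV₂
  set zTT : ℝ := ∑ E ∈ univ.filter (fun E => trc U₂ V₂ E = (true, true)), w₀ E with hzTTd
  set zTF : ℝ := ∑ E ∈ univ.filter (fun E => trc U₂ V₂ E = (true, false)), w₀ E with hzTFd
  set zFT : ℝ := ∑ E ∈ univ.filter (fun E => trc U₂ V₂ E = (false, true)), w₀ E with hzFTd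
  set zFF : ℝ := ∑ E ∈ univ.filter (fun E => trc U₂ V₂ E = (false, false)), w₀ E with hzFFd
  set gTT : ℝ := ∑ E ∈ univ.filter (fun E => trc U₂ V₂ E = (true, true)), w₁ E with hgTTd
  set gTF : ℝ := ∑ E ∈ univ.filter (fun E => trc U₂ V₂ E = (true, false)), w₁ E with hgTFd
  set gFT : ℝ := ∑ E ∈ univ.filter (fun E => trc U₂ V₂ E = (false, true)), w₁ E with hgFTd
  set gFF : ℝ := ∑ E ∈ univ.filter (fun E => trc U₂ V₂ E = (false, false)), w₁ E with hgFFd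
  set p : Bool × Bool → ℝ :=
    fun t => ∑ D ∈ univ.filter (fun D => trc U₁ V₁ D = t), w' D with hp
  have hpnn : ∀ t, 0 ≤ p t := fun t => sum_nonneg fun D _ => hw'0 D
  -- fiber values for w'
  have hpu : p (true, true) + p (true, false) = r := by
    rw [hp, ← sum_fib_u U₁ V₁ w', hw'mar U₁]
  have hpv : p (true, true) + p (false, true) = r := by
    rw [hp, ← sum_fib_v U₁ V₁ w', hw'mar V₁]
  have hptot : p (true, true) + p (true, false) + p (false, true) + p (false, false) = 1 := by
    rw [hp, ← sum_fib_tot U₁ V₁ w', hw'1]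
  set a : ℝ := p (true, false) with ha
  have hpTT : p (true, true) = r - a := by rw [ha] at hpu ⊢; linarith
  have hpFT : p (false, true) = a := by linarith
  have hpFF : p (false, false) = 1 - r - a := by linarith
  have ha0 : 0 ≤ a := hpnn _
  have har : a ≤ r := by have := hpnn (true, true); rw [hpTT] at this; linarith
  set α : ℝ := a / r with hα
  have hα0 : 0 ≤ α := div_nonneg ha0 hr0.le
  have hα1 : α ≤ 1 := (div_le_one hr0).2 har
  have hαr : α * r = a := div_mul_cancel₀ a hr0.ne'
  -- fiber values for w₀ and w₁
  have hzTT : zTT = 0 := by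
    rw [hzTTd]
    refine sum_eq_zero fun E hE => ?_
    rw [mem_filter] at hE
    by_contra h0
    exact hdisj E h0 ⟨by simpa [trc] using congrArg Prod.fst hE.2, by simpa [trc] using congrArg Prod.snd hE.2⟩
  have hzu : zTT + zTF = r := by
    rw [hzTTd, hzTFd, ← sum_fib_u U₂ V₂ w₀, hw₀mar U₂]
  have hzv : zTT + zFT = r := by
    rw [hzTTd, hzFTd, ← sum_fib_v U₂ V₂ w₀, hw₀mar V₂]
  have hztot : zTT + zTF + zFT + zFF = 1 := by
    rw [hzTTd, hzTFd, hzFTd, hzFFd, ← sum_fib_tot U₂ V₂ w₀, hw₀1]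
  have hgTF : gTF = 0 := by
    rw [hgTFd]
    refine sum_eq_zero fun E hE => ?_
    rw [mem_filter] at hE
    by_contra h0
    have h1 : U₂ ∈ E := by simpa [trc] using congrArg Prod.fst hE.2
    have h2 : V₂ ∉ E := by simpa [trc] using congrArg Prod.snd hE.2
    exact h2 ((hsame E h0).1 h1)
  have hgFT : gFT = 0 := by
    rw [hgFTd]
    refine sum_eq_zero fun E hE => ?_
    rw [mem_filter] at hE
    by_contra h0
    have h1 : U₂ ∉ E := by simpa [trc] using congrArg Prod.fst hE.2
    have h2 : V₂ ∈ E := by simpa [trc] using congrArg Prod.snd hE.2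
    exact h1 ((hsame E h0).2 h2)
  have hgu : gTT + gTF = r := by
    rw [hgTTd, hgTFd, ← sum_fib_u U₂ V₂ w₁, hw₁mar U₂]
  have hgtot : gTT + gTF + gFT + gFF = 1 := by
    rw [hgTTd, hgTFd, hgFTd, hgFFd, ← sum_fib_tot U₂ V₂ w₁, hw₁1]
  set μ : Finset ↥H.verts → ℝ := fun E => α * w₀ E + (1 - α) * w₁ E with hμ
  have hμ0 : ∀ E, 0 ≤ μ E := fun E =>
    add_nonneg (mul_nonneg hα0 (hw₀0 E)) (mul_nonneg (by linarith) (hw₁0 E))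
  have hμsplit : ∀ T : Finset (Finset ↥H.verts),
      (∑ E ∈ T, μ E) = α * (∑ E ∈ T, w₀ E) + (1 - α) * (∑ E ∈ T, w₁ E) := by
    intro T
    rw [hμ, sum_add_distrib, mul_sum, mul_sum]
  have hgvt : gTT + gFT = r := by
    rw [hgTTd, hgFTd, ← sum_fib_v U₂ V₂ w₁, hw₁mar V₂]
  have hm : ∀ t, (∑ E ∈ univ.filter (fun E => trc U₂ V₂ E = t), μ E) = p t := by
    intro t
    have hs := hμsplit (univ.filter (fun E => trc U₂ V₂ E = t))
    rcases t with ⟨tu, tv⟩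
    cases tu <;> cases tv <;> rw [hs]
    · rw [← hzFFd, ← hgFFd, hpFF]; nlinarith [hαr]
    · rw [← hzFTd, ← hgFTd, hpFT]; nlinarith [hαr]
    · rw [← hzTFd, ← hgTFd]; nlinarith [hαr]
    · rw [← hzTTd, ← hgTTd, hpTT]; nlinarith [hαr]
  -- the glued distribution
  set W : Finset ↥G'.verts → Finset ↥H.verts → ℝ :=
    fun D E => if trc U₁ V₁ D = trc U₂ V₂ E then w' D * μ E / p (trc U₁ V₁ D) else 0 with hW
  have hWnn : ∀ (D : Finset ↥G'.verts) (E : Finset ↥H.verts), 0 ≤ W D E := by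
    intro D E
    simp only [hW]
    split
    · exact div_nonneg (mul_nonneg (hw'0 D) (hμ0 E)) (hpnn _)
    · exact le_refl 0
  have keyT : ∀ S : Finset (Finset ↥G'.verts),
      (∑ D ∈ S, ∑ E : Finset ↥H.verts, W D E) = ∑ D ∈ S, w' D := by
    intro S
    simp only [hW]
    rw [key_sum U₁ V₁ U₂ V₂ w' μ p S univ]
    rw [← Finset.sum_fiberwise S (fun D => trc U₁ V₁ D) w']
    refine sum_congr rfl fun t _ => ?_
    rw [hm t]
    by_cases hpt : p t = 0
    · have hS0 : (∑ D ∈ S.filter (fun D => trc U₁ V₁ D = t), w' D) = 0 := by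
        refine le_antisymm ?_ (sum_nonneg fun D _ => hw'0 D)
        calc (∑ D ∈ S.filter (fun D => trc U₁ V₁ D = t), w' D) ≤ p t := by
              rw [hp]
              exact sum_le_sum_of_subset_of_nonneg
                (filter_subset_filter _ (subset_univ S)) (fun D _ _ => hw'0 D)
          _ = 0 := hpt
      rw [hS0, zero_mul]
    · rw [div_self hpt, mul_one]
  have keyS : ∀ T : Finset (Finset ↥H.verts),
      (∑ D : Finset ↥G'.verts, ∑ E ∈ T, W D E) = ∑ E ∈ T, μ E := by
    intro T
    simp only [hW]
    rw [key_sum U₁ V₁ U₂ V₂ w' μ p univ T]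
    rw [← Finset.sum_fiberwise T (fun E => trc U₂ V₂ E) μ]
    refine sum_congr rfl fun t _ => ?_
    have hPt : (∑ D ∈ univ.filter (fun D => trc U₁ V₁ D = t), w' D) = p t := by rw [hp]
    rw [hPt]
    by_cases hpt : p t = 0
    · have hT0 : (∑ E ∈ T.filter (fun E => trc U₂ V₂ E = t), μ E) = 0 := by
        refine le_antisymm ?_ (sum_nonneg fun E _ => hμ0 E)
        calc (∑ E ∈ T.filter (fun E => trc U₂ V₂ E = t), μ E)
            ≤ ∑ E ∈ univ.filter (fun E => trc U₂ V₂ E = t), μ E :=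
              sum_le_sum_of_subset_of_nonneg (filter_subset_filter _ (subset_univ T))
                (fun E _ _ => hμ0 E)
          _ = 0 := by rw [hm t, hpt]
      rw [hT0, hpt]
      simp
    · rw [mul_comm, div_mul_cancel₀ _ hpt]
  set w : Finset V → ℝ := fun D => ∑ D' : Finset ↥G'.verts, ∑ E : Finset ↥H.verts,
    if (D'.image Subtype.val ∪ E.image Subtype.val) = D then W D' E else 0 with hwdef
  have transfer : ∀ (pr : Finset V → Prop) (inst : DecidablePred pr),
      (∑ D ∈ @filter _ pr inst univ, w D)
        = ∑ D' : Finset ↥G'.verts, ∑ E : Finset ↥H.verts,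
            if pr (D'.image Subtype.val ∪ E.image Subtype.val) then W D' E else 0 := by
    intro pr inst
    simp only [hwdef]
    rw [sum_comm]
    refine sum_congr rfl fun D' _ => ?_
    rw [sum_comm]
    refine sum_congr rfl fun E _ => ?_
    rw [Finset.sum_ite_eq]
    simp [mem_filter]
  have hcollapse : ∀ (c : Prop) (inst : Decidable c) (F : Finset ↥H.verts → ℝ),
      (∑ E : Finset ↥H.verts, @ite _ c inst (F E) 0)
        = @ite _ c inst (∑ E : Finset ↥H.verts, F E) 0 := by
    intro c inst F
    split <;> simp
  have hmem_un : ∀ (x : V) (D' : Finset ↥G'.verts) (E : Finset ↥H.verts),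
      x ∈ (D'.image Subtype.val ∪ E.image Subtype.val) ↔
        ((∃ hx : x ∈ G'.verts, (⟨x, hx⟩ : ↥G'.verts) ∈ D')
          ∨ (∃ hx : x ∈ H.verts, (⟨x, hx⟩ : ↥H.verts) ∈ E)) := by
    intro x D' E
    simp only [Finset.mem_union, Finset.mem_image]
    constructor
    · rintro (⟨y, hy, rfl⟩ | ⟨y, hy, rfl⟩)
      · exact Or.inl ⟨y.2, hy⟩
      · exact Or.inr ⟨y.2, hy⟩
    · rintro (⟨hx, hD⟩ | ⟨hx, hE⟩)
      · exact Or.inl ⟨⟨x, hx⟩, hD, rfl⟩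
      · exact Or.inr ⟨⟨x, hx⟩, hE, rfl⟩
  refine ⟨w, ?_, ?_, ?_, ?_⟩
  · -- nonnegativity
    intro D
    simp only [hwdef]
    refine sum_nonneg fun D' _ => sum_nonneg fun E _ => ?_
    split
    · exact hWnn D' E
    · exact le_refl 0
  · -- total mass
    have htr := transfer (fun _ => True) (fun _ => instDecidableTrue)
    simp only [if_true, filter_true] at htr
    rw [htr, keyT univ, hw'1]
  · -- domination
    intro x
    rw [transfer (fun D => ∃ y ∈ D, y = x ∨ G.Adj y x) _]
    by_cases hxG : x ∈ G'.verts
    · simp only [hxG, if_true]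
      have h1 : f' x ≤ ∑ D ∈ univ.filter
          (fun D => ∃ y ∈ D, y = (⟨x, hxG⟩ : ↥G'.verts) ∨ G'.coe.Adj y ⟨x, hxG⟩), w' D :=
        hw'dom ⟨x, hxG⟩
      rw [← keyT] at h1
      refine h1.trans ?_
      rw [sum_filter]
      refine sum_le_sum fun D' _ => ?_
      by_cases hc : ∃ y ∈ D', y = (⟨x, hxG⟩ : ↥G'.verts) ∨ G'.coe.Adj y ⟨x, hxG⟩
      · rw [if_pos hc]
        refine sum_le_sum fun E _ => ?_
        have hcond : ∃ y ∈ (D'.image Subtype.val ∪ E.image Subtype.val), y = x ∨ G.Adj y x := by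
          obtain ⟨y, hy, hy2⟩ := hc
          refine ⟨y.1, Finset.mem_union_left _ (Finset.mem_image_of_mem _ hy), ?_⟩
          rcases hy2 with rfl | hadj
          · exact Or.inl rfl
          · have hadj' : G'.Adj y.1 x := by simpa using hadj
            exact Or.inr (G'.adj_sub hadj')
        rw [if_pos hcond]
      · rw [if_neg hc]
        refine sum_nonneg fun E _ => ?_
        split
        · exact hWnn D' E
        · exact le_refl 0
    · simp only [hxG, if_false]
      have hxH : x ∈ H.verts := (hVmem x).resolve_left hxG
      have hμdom : h x ≤ ∑ E ∈ univ.filter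
          (fun E => ∃ y ∈ E, y = (⟨x, hxH⟩ : ↥H.verts) ∨ H.coe.Adj y ⟨x, hxH⟩), μ E := by
        rw [hμsplit]
        have h0 : h x ≤ ∑ E ∈ univ.filter
            (fun E => ∃ y ∈ E, y = (⟨x, hxH⟩ : ↥H.verts) ∨ H.coe.Adj y ⟨x, hxH⟩), w₀ E := by
          convert hw₀dom ⟨x, hxH⟩
        have h1 : h x ≤ ∑ E ∈ univ.filter
            (fun E => ∃ y ∈ E, y = (⟨x, hxH⟩ : ↥H.verts) ∨ H.coe.Adj y ⟨x, hxH⟩), w₁ E := by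
          convert hw₁dom ⟨x, hxH⟩
        nlinarith [h0, h1, hα0, hα1]
      rw [← keyS] at hμdom
      refine hμdom.trans ?_
      refine sum_le_sum fun D' _ => ?_
      rw [sum_filter]
      refine sum_le_sum fun E _ => ?_
      by_cases hc : ∃ y ∈ E, y = (⟨x, hxH⟩ : ↥H.verts) ∨ H.coe.Adj y ⟨x, hxH⟩
      · have hcond : ∃ y ∈ (D'.image Subtype.val ∪ E.image Subtype.val), y = x ∨ G.Adj y x := by
          obtain ⟨y, hy, hy2⟩ := hc
          refine ⟨y.1, Finset.mem_union_right _ (Finset.mem_image_of_mem _ hy), ?_⟩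
          rcases hy2 with rfl | hadj
          · exact Or.inl rfl
          · have hadj' : H.Adj y.1 x := by simpa using hadj
            exact Or.inr (H.adj_sub hadj')
        rw [if_pos hc, if_pos hcond]
      · rw [if_neg hc]
        split
        · exact hWnn D' E
        · exact le_refl 0
  · -- marginals
    intro x
    rw [transfer (fun D => x ∈ D) _]
    by_cases hxG : x ∈ G'.verts
    · have hstep : ∀ (D' : Finset ↥G'.verts) (E : Finset ↥H.verts),
          (if x ∈ (D'.image Subtype.val ∪ E.image Subtype.val) then W D' E else 0)
            = if (⟨x, hxG⟩ : ↥G'.verts) ∈ D' then W D' E else 0 := by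
        intro D' E
        by_cases hd : (⟨x, hxG⟩ : ↥G'.verts) ∈ D'
        · rw [if_pos hd, if_pos ((hmem_un x D' E).2 (Or.inl ⟨hxG, hd⟩))]
        · rw [if_neg hd]
          by_cases hxE : ∃ hx : x ∈ H.verts, (⟨x, hx⟩ : ↥H.verts) ∈ E
          · obtain ⟨hxH, hE⟩ := hxE
            have hx2 : x = u ∨ x = v := by
              have hx3 : x ∈ ({u, v} : Set V) := hsep ▸ ⟨hxG, hxH⟩
              simpa using hx3
            have hW0 : W D' E = 0 := by
              simp only [hW]
              rw [if_neg]
              intro hcon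
              rcases hx2 with rfl | rfl
              · have hU : U₁ ∉ D' := hd
                have hU2 : U₂ ∈ E := hE
                have hfst := congrArg Prod.fst hcon
                simp [trc, hU, hU2] at hfst
              · have hV : V₁ ∉ D' := hd
                have hV2 : V₂ ∈ E := hE
                have hsnd := congrArg Prod.snd hcon
                simp [trc, hV, hV2] at hsnd
            rw [hW0]
            simp
          · rw [if_neg]
            intro hcon
            rcases (hmem_un x D' E).1 hcon with ⟨hx1, hD⟩ | hxE'
            · exact hd hD
            · exact hxE hxE'
      calc (∑ D' : Finset ↥G'.verts, ∑ E : Finset ↥H.verts,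
              if x ∈ (D'.image Subtype.val ∪ E.image Subtype.val) then W D' E else 0)
          = ∑ D' : Finset ↥G'.verts, ∑ E : Finset ↥H.verts,
              if (⟨x, hxG⟩ : ↥G'.verts) ∈ D' then W D' E else 0 :=
            sum_congr rfl fun D' _ => sum_congr rfl fun E _ => hstep D' E
        _ = ∑ D' : Finset ↥G'.verts,
              if (⟨x, hxG⟩ : ↥G'.verts) ∈ D' then (∑ E : Finset ↥H.verts, W D' E) else 0 :=
            sum_congr rfl fun D' _ => hcollapse _ _ _
        _ = ∑ D' ∈ univ.filter (fun D' => (⟨x, hxG⟩ : ↥G'.verts) ∈ D'),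
              ∑ E : Finset ↥H.verts, W D' E := (sum_filter _ _).symm
        _ = ∑ D' ∈ univ.filter (fun D' => (⟨x, hxG⟩ : ↥G'.verts) ∈ D'), w' D' := keyT _
        _ = r := hw'mar _
    · have hxH : x ∈ H.verts := (hVmem x).resolve_left hxG
      have hstep : ∀ (D' : Finset ↥G'.verts) (E : Finset ↥H.verts),
          (if x ∈ (D'.image Subtype.val ∪ E.image Subtype.val) then W D' E else 0)
            = if (⟨x, hxH⟩ : ↥H.verts) ∈ E then W D' E else 0 := by
        intro D' E
        by_cases he : (⟨x, hxH⟩ : ↥H.verts) ∈ E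
        · rw [if_pos he, if_pos ((hmem_un x D' E).2 (Or.inr ⟨hxH, he⟩))]
        · rw [if_neg he, if_neg]
          intro hcon
          rcases (hmem_un x D' E).1 hcon with ⟨hx1, _⟩ | ⟨hx1, hE⟩
          · exact hxG hx1
          · exact he hE
      calc (∑ D' : Finset ↥G'.verts, ∑ E : Finset ↥H.verts,
              if x ∈ (D'.image Subtype.val ∪ E.image Subtype.val) then W D' E else 0)
          = ∑ D' : Finset ↥G'.verts, ∑ E : Finset ↥H.verts,
              if (⟨x, hxH⟩ : ↥H.verts) ∈ E then W D' E else 0 :=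
            sum_congr rfl fun D' _ => sum_congr rfl fun E _ => hstep D' E
        _ = ∑ D' : Finset ↥G'.verts,
              ∑ E ∈ univ.filter (fun E => (⟨x, hxH⟩ : ↥H.verts) ∈ E), W D' E :=
            sum_congr rfl fun D' _ => (sum_filter _ _).symm
        _ = ∑ E ∈ univ.filter (fun E => (⟨x, hxH⟩ : ↥H.verts) ∈ E), μ E := keyS _
        _ = α * r + (1 - α) * r := by rw [hμsplit, hw₀mar ⟨x, hxH⟩, hw₁mar ⟨x, hxH⟩]
        _ = r := by ring
end
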